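/- arXiv:2604.22609 — 7 statements merged into one kernel-verified Lean document; each statement's English description precedes it below -/
import Mathlib

section
/- Let R be the free associative algebra K⟨x_1,…,x_m⟩ over a field K (or more generally any K-algebra), and let M and N be R-modules with dim_K M = dim_K N finite. Assume that M or N has Jordan–Hölder composition length at most 2, and that for every submodule X of M one has dim_K Hom_R(X, M) ≤ dim_K Hom_R(X, N). Then either M ≅ N, or M has Jordan–Hölder composition length exactly 2 and, denoting by S and T the composition factors of M (S ≅ T allowed), N ≅ S ⊕ T. -/
/-!
If some map `M → N` is injective, it is an isomorphism by dimension count. Otherwise the length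
hypothesis forces every nonzero `f : M → N` to have simple image. Two such maps `f`, `g` with
different images have the same kernel: the images are independent, so
`ker (f + g) = ker f ⊓ ker g`, which is maximal because `f + g` has simple image too.
Take `f ≠ 0`, a simple `S ≤ ker f` and an embedding `ψ : S → N`, which exists because
`Hom(S, M)` contains the inclusion. If every map `M → N` landed in `ψ(S)`, then `Hom(M, N)`
would embed into `Hom(M, S)`, a proper subspace of `End(M)` (it misses the identity),
contradicting `dim End(M) ≤ dim Hom(M, N)`. So some `g` with `ker g = ker f` has image
different from `ψ(S)`; the length hypothesis then gives `S = ker g`, and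
`N = ψ(S) ⊕ g(M) ≅ S ⊕ M/S` by dimension count.
-/

/-- A module has Jordan–Hölder composition length at most `2` iff it has a submodule
such that both the submodule and the quotient are simple or zero. -/
def lengthLE2 (R M : Type*) [Ring R] [AddCommGroup M] [Module R M] : Prop :=
  ∃ X : Submodule R M, (IsSimpleModule R X ∨ Subsingleton X) ∧
    (IsSimpleModule R (M ⧸ X) ∨ Subsingleton (M ⧸ X))

open Module LinearMap

section Length

variable {R M : Type*} [Ring R] [AddCommGroup M] [Module R M]

lemma Module.length_eq_length_add_length_quotient (p : Submodule R M) :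
    Module.length R M = Module.length R p + Module.length R (M ⧸ p) :=
  length_eq_add_of_exact p.subtype p.mkQ p.injective_subtype p.mkQ_surjective
    (LinearMap.exact_subtype_mkQ p)

lemma lengthLE2.length_le_two (h : lengthLE2 R M) : Module.length R M ≤ 2 := by
  obtain ⟨X, hX, hQ⟩ := h
  rw [length_eq_length_add_length_quotient X]
  rcases hX with hX | hX <;> rcases hQ with hQ | hQ <;> simp [one_add_one_eq_two]

lemma Submodule.isAtom_and_isCoatom_of_length_le_two (h : Module.length R M ≤ 2)
    {p : Submodule R M} (hbot : p ≠ ⊥) (htop : p ≠ ⊤) : IsAtom p ∧ IsCoatom p := by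
  have : Nontrivial p := Submodule.nontrivial_iff_ne_bot.2 hbot
  have : Nontrivial (M ⧸ p) := Submodule.Quotient.nontrivial_iff.2 htop
  have hp := Module.length_pos (R := R) (M := p)
  have hq := Module.length_pos (R := R) (M := M ⧸ p)
  rw [length_eq_length_add_length_quotient p] at h
  rw [← isSimpleModule_iff_isAtom, ← isSimpleModule_iff_isCoatom, ← length_eq_one_iff,
    ← length_eq_one_iff]
  generalize Module.length R p = a at *
  generalize Module.length R (M ⧸ p) = b at *
  lift a to ℕ using (by rintro rfl; simp at h)
  lift b to ℕ using (by rintro rfl; simp at h)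
  norm_cast at *
  omega

lemma isCompl_of_isAtom_of_length_le_two (h : Module.length R M ≤ 2) {p q : Submodule R M}
    (hp : IsAtom p) (hq : IsAtom q) (hpq : p ≠ q) : IsCompl p q := by
  refine ⟨hp.disjoint_of_ne hq hpq, codisjoint_iff.2 (by_contra fun hsup => hpq ?_)⟩
  have hatom : IsAtom (p ⊔ q) :=
    (Submodule.isAtom_and_isCoatom_of_length_le_two h (ne_bot_of_le_ne_bot hp.1 le_sup_left)
      hsup).1
  exact ((hatom.le_iff.1 le_sup_left).resolve_left hp.1).trans
    ((hatom.le_iff.1 le_sup_right).resolve_left hq.1).symm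

end Length

lemma LinearMap.ker_add_eq_inf_of_disjoint_range {R M N : Type*} [Ring R] [AddCommGroup M]
    [Module R M] [AddCommGroup N] [Module R N] {f g : M →ₗ[R] N}
    (h : Disjoint (range f) (range g)) : ker (f + g) = ker f ⊓ ker g := by
  refine le_antisymm (fun x hx => ?_) (fun x ⟨hf, hg⟩ => by simp_all)
  have hfx : f x = -g x := eq_neg_of_add_eq_zero_left hx
  have : f x = 0 := (Submodule.disjoint_def.1 h) _ ⟨x, rfl⟩ (hfx ▸ neg_mem ⟨x, rfl⟩)
  exact ⟨this, by simpa [this] using hfx⟩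

section FiniteDimensional

variable {K R : Type*} [Field K] [Ring R] [Algebra K R]
variable {M N : Type*}
  [AddCommGroup M] [Module K M] [Module R M] [IsScalarTower K R M]
  [AddCommGroup N] [Module K N] [Module R N] [IsScalarTower K R N]

instance Submodule.finiteDimensional_of_isScalarTower [FiniteDimensional K M]
    (p : Submodule R M) : FiniteDimensional K p :=
  inferInstanceAs (FiniteDimensional K (p.restrictScalars K))

variable (K)

lemma LinearMap.finrank_range_add_finrank_ker_of_isScalarTower [FiniteDimensional K M]
    (f : M →ₗ[R] N) : finrank K (range f) + finrank K (ker f) = finrank K M :=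
  (f.restrictScalars K).finrank_range_add_finrank_ker

lemma Submodule.eq_of_le_of_finrank_le_of_isScalarTower [FiniteDimensional K M]
    {p q : Submodule R M} (hle : p ≤ q) (h : finrank K q ≤ finrank K p) : p = q :=
  Submodule.restrictScalars_injective K _ _ <|
    Submodule.eq_of_le_of_finrank_le (S₁ := p.restrictScalars K) hle h

lemma Submodule.finrank_add_finrank_of_isCompl_of_isScalarTower [FiniteDimensional K M]
    {p q : Submodule R M} (h : IsCompl p q) : finrank K p + finrank K q = finrank K M :=
  Submodule.finrank_add_eq_of_isCompl ((Submodule.isCompl_restrictScalars_iff K).2 h)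

lemma Submodule.isCompl_of_disjoint_of_finrank_add_eq [FiniteDimensional K M]
    {p q : Submodule R M} (h : Disjoint p q) (hdim : finrank K p + finrank K q = finrank K M) :
    IsCompl p q :=
  (Submodule.isCompl_restrictScalars_iff K).1 <|
    (Submodule.isCompl_iff_disjoint _ _ hdim.ge).2 ((Submodule.disjoint_restrictScalars_iff K).2 h)

end FiniteDimensional

lemma finrank_linearMap_congr_left (K : Type*) {R P Q N : Type*} [Field K] [Ring R]
    [AddCommGroup P] [Module R P] [AddCommGroup Q] [Module R Q]
    [AddCommGroup N] [Module K N] [Module R N] [SMulCommClass R K N] (e : P ≃ₗ[R] Q) :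
    finrank K (P →ₗ[R] N) = finrank K (Q →ₗ[R] N) :=
  LinearEquiv.finrank_eq <| LinearEquiv.ofLinearMap (lcomp K N e.symm.toLinearMap)
    (lcomp K N e.toLinearMap) (by ext; simp) (by ext; simp)

section HomDimension

variable {K R : Type*} [Field K] [Ring R] [Algebra K R]
variable {M N P : Type*}
  [AddCommGroup M] [Module K M] [Module R M] [IsScalarTower K R M] [SMulCommClass R K M]
  [AddCommGroup N] [Module K N] [Module R N] [IsScalarTower K R N] [SMulCommClass R K N]
  [AddCommGroup P] [Module K P] [Module R P] [IsScalarTower K R P]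

lemma finrank_linearMap_submodule_lt_of_not_range_le [FiniteDimensional K P]
    [FiniteDimensional K M] (S : Submodule R M) {u : P →ₗ[R] M} (hu : ¬ range u ≤ S) :
    finrank K (P →ₗ[R] S) < finrank K (P →ₗ[R] M) := by
  let Φ := compRight K (M := P) S.subtype
  have hΦ : Function.Injective Φ := fun g g' h => by ext x; exact congr($h x)
  have hu : u ∉ range Φ := by
    rintro ⟨g, rfl⟩
    exact hu (by rintro _ ⟨x, rfl⟩; exact (g x).2)
  rw [← LinearMap.finrank_range_of_inj hΦ]
  exact Submodule.finrank_lt fun h => hu (h ▸ Submodule.mem_top)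

lemma finrank_linearMap_le_of_forall_range_le [FiniteDimensional K P] [FiniteDimensional K M]
    {ψ : M →ₗ[R] N} (hψ : Function.Injective ψ) (h : ∀ g : P →ₗ[R] N, range g ≤ range ψ) :
    finrank K (P →ₗ[R] N) ≤ finrank K (P →ₗ[R] M) := by
  let e := LinearEquiv.ofInjective ψ hψ
  refine LinearMap.finrank_le_finrank_of_surjective (f := compRight K (M := P) ψ) fun g => ?_
  refine ⟨e.symm.toLinearMap ∘ₗ g.codRestrict (range ψ) fun x => h g ⟨x, rfl⟩, ?_⟩
  ext x
  exact congrArg Subtype.val (e.apply_symm_apply ⟨g x, h g ⟨x, rfl⟩⟩)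

end HomDimension

lemma LinearMap.ker_eq_ker_of_range_ne {R M N : Type*} [Ring R] [AddCommGroup M] [Module R M]
    [AddCommGroup N] [Module R N] (hatom : ∀ f : M →ₗ[R] N, f ≠ 0 → IsAtom (range f))
    {f g : M →ₗ[R] N} (hf : f ≠ 0) (hg : g ≠ 0) (h : range f ≠ range g) : ker f = ker g := by
  have hfg : f + g ≠ 0 := fun h0 => h (by rw [eq_neg_of_add_eq_zero_left h0, range_neg])
  have : IsSimpleModule R (range (f + g)) := isSimpleModule_iff_isAtom.2 (hatom _ hfg)
  have hcoatom : IsCoatom (ker (f + g)) :=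
    isSimpleModule_iff_isCoatom.1 (IsSimpleModule.congr (f + g).quotKerEquivRange)
  rw [ker_add_eq_inf_of_disjoint_range ((hatom f hf).disjoint_of_ne (hatom g hg) h)] at hcoatom
  exact ((hcoatom.le_iff.1 inf_le_left).resolve_left (mt ker_eq_top.1 hf)).trans
    ((hcoatom.le_iff.1 inf_le_right).resolve_left (mt ker_eq_top.1 hg)).symm

section TwoCompositionFactors

variable {K R : Type*} [Field K] [Ring R] [Algebra K R]
variable {M N : Type*}
  [AddCommGroup M] [Module K M] [Module R M] [IsScalarTower K R M]
  [AddCommGroup N] [Module K N] [Module R N] [IsScalarTower K R N]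
  [FiniteDimensional K M]

section

variable [SMulCommClass R K M] [SMulCommClass R K N]

lemma exists_ker_eq_range_ne (hatom : ∀ f : M →ₗ[R] N, f ≠ 0 → IsAtom (range f))
    (hEnd : finrank K (M →ₗ[R] M) ≤ finrank K (M →ₗ[R] N)) {f : M →ₗ[R] N} (hf : f ≠ 0)
    {S : Submodule R M} (hS : S ≤ ker f) {ψ : S →ₗ[R] N} (hψ : Function.Injective ψ) :
    ∃ g : M →ₗ[R] N, g ≠ 0 ∧ ker g = ker f ∧ range g ≠ range ψ := by
  by_cases hfψ : range f = range ψ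
  swap
  · exact ⟨f, hf, rfl, hfψ⟩
  obtain ⟨g, hg⟩ : ∃ g : M →ₗ[R] N, ¬ range g ≤ range ψ := by
    by_contra! hall
    have hid : ¬ range (LinearMap.id : M →ₗ[R] M) ≤ S := fun h =>
      hf (ker_eq_top.1 (top_le_iff.1 (range_id (R := R) (M := M) ▸ h.trans hS)))
    exact hEnd.not_gt ((finrank_linearMap_le_of_forall_range_le hψ hall).trans_lt
      (finrank_linearMap_submodule_lt_of_not_range_le S hid))
  have hg0 : g ≠ 0 := by rintro rfl; simp at hg
  exact ⟨g, hg0, ker_eq_ker_of_range_ne hatom hg0 hf fun h => hg (h ▸ hfψ.le), fun h => hg h.le⟩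

end

variable [FiniteDimensional K N]

lemma isAtom_range_of_length_le_two (hdim : finrank K M = finrank K N)
    (hlen : Module.length R M ≤ 2 ∨ Module.length R N ≤ 2) {f : M →ₗ[R] N} (hf : f ≠ 0)
    (hinj : ¬ Function.Injective f) : IsAtom (range f) := by
  rcases hlen with hM | hN
  · have := isSimpleModule_iff_isCoatom.2 (Submodule.isAtom_and_isCoatom_of_length_le_two hM
      (mt ker_eq_bot.1 hinj) (mt ker_eq_top.1 hf)).2
    exact isSimpleModule_iff_isAtom.1 (IsSimpleModule.congr f.quotKerEquivRange.symm)
  · have hsurj : range f ≠ ⊤ := fun h => hinj <|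
      (injective_iff_surjective_of_finrank_eq_finrank hdim (f := f.restrictScalars K)).2
        (show Function.Surjective f from range_eq_top.1 h)
    exact (Submodule.isAtom_and_isCoatom_of_length_le_two hN (mt range_eq_bot.1 hf) hsurj).1

lemma eq_ker_of_length_le_two (hdim : finrank K M = finrank K N)
    (hlen : Module.length R M ≤ 2 ∨ Module.length R N ≤ 2) {S : Submodule R M} (hS : IsAtom S)
    {g : M →ₗ[R] N} (hg : g ≠ 0) (hSg : S ≤ ker g) {ψ : S →ₗ[R] N} (hψ : Function.Injective ψ)
    (hψatom : IsAtom (range ψ)) (hgatom : IsAtom (range g)) (hne : range ψ ≠ range g) :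
    S = ker g := by
  rcases hlen with hM | hN
  · have hker := (Submodule.isAtom_and_isCoatom_of_length_le_two hM
      (ne_bot_of_le_ne_bot hS.1 hSg) (mt ker_eq_top.1 hg)).1
    exact (hker.le_iff.1 hSg).resolve_left hS.1
  · have hcompl := isCompl_of_isAtom_of_length_le_two hN hψatom hgatom hne
    have hψS : finrank K (range ψ) = finrank K S :=
      (LinearEquiv.ofInjective ψ hψ).restrictScalars K |>.finrank_eq.symm
    have hsum := Submodule.finrank_add_finrank_of_isCompl_of_isScalarTower K hcompl
    have hrank := finrank_range_add_finrank_ker_of_isScalarTower K g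
    exact Submodule.eq_of_le_of_finrank_le_of_isScalarTower K hSg (by omega)

variable [SMulCommClass R K M] [SMulCommClass R K N]

lemma exists_linearMap_ne_zero_of_finrank_le {X : Submodule R M} (hX : X ≠ ⊥)
    (h : finrank K (X →ₗ[R] M) ≤ finrank K (X →ₗ[R] N)) : ∃ g : X →ₗ[R] N, g ≠ 0 := by
  have hsubtype : X.subtype ≠ 0 := by
    obtain ⟨x, hx, hx0⟩ := Submodule.exists_mem_ne_zero_of_ne_bot hX
    exact fun h0 => hx0 congr($h0 ⟨x, hx⟩)
  exact finrank_pos_iff_exists_ne_zero.1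
    ((finrank_pos_iff_exists_ne_zero.2 ⟨_, hsubtype⟩).trans_le h)

theorem exists_isSimpleModule_linearEquiv_prod (hdim : finrank K M = finrank K N)
    (hlen : Module.length R M ≤ 2 ∨ Module.length R N ≤ 2)
    (hhom : ∀ X : Submodule R M, finrank K (X →ₗ[R] M) ≤ finrank K (X →ₗ[R] N))
    (hinj : ∀ f : M →ₗ[R] N, ¬ Function.Injective f) :
    ∃ S : Submodule R M, IsSimpleModule R S ∧ IsSimpleModule R (M ⧸ S) ∧
      Nonempty (N ≃ₗ[R] S × (M ⧸ S)) := by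
  have hatom (f : M →ₗ[R] N) (hf : f ≠ 0) : IsAtom (range f) :=
    isAtom_range_of_length_le_two hdim hlen hf (hinj f)
  have hEnd : finrank K (M →ₗ[R] M) ≤ finrank K (M →ₗ[R] N) := by
    simpa only [finrank_linearMap_congr_left K Submodule.topEquiv] using hhom ⊤
  have : Nontrivial M := not_subsingleton_iff_nontrivial.1 fun _ =>
    hinj 0 (Function.injective_of_subsingleton _)
  obtain ⟨f, hf⟩ := finrank_pos_iff_exists_ne_zero.1
    ((finrank_pos_iff_exists_ne_zero.2 ⟨1, one_ne_zero⟩).trans_le hEnd)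
  have : IsArtinian R M := isArtinian_of_tower K inferInstance
  obtain ⟨S, hSatom, hSf⟩ :=
    (eq_bot_or_exists_atom_le (ker f)).resolve_left (mt ker_eq_bot.1 (hinj f))
  have : IsSimpleModule R S := isSimpleModule_iff_isAtom.2 hSatom
  obtain ⟨ψ, hψ⟩ := exists_linearMap_ne_zero_of_finrank_le hSatom.1 (hhom S)
  let eψ := LinearEquiv.ofInjective ψ (injective_of_ne_zero hψ)
  have hψatom : IsAtom (range ψ) := isSimpleModule_iff_isAtom.1 (IsSimpleModule.congr eψ.symm)
  obtain ⟨g, hg, hgf, hgψ⟩ := exists_ker_eq_range_ne hatom hEnd hf hSf (injective_of_ne_zero hψ)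
  obtain rfl : S = ker g := eq_ker_of_length_le_two hdim hlen hSatom hg (hgf ▸ hSf)
    (injective_of_ne_zero hψ) hψatom (hatom g hg) hgψ.symm
  have hψS : finrank K (range ψ) = finrank K (ker g) := (eψ.restrictScalars K).finrank_eq.symm
  have hrank := finrank_range_add_finrank_ker_of_isScalarTower K g
  have hcompl := Submodule.isCompl_of_disjoint_of_finrank_add_eq K
    (hψatom.disjoint_of_ne (hatom g hg) hgψ.symm) (by omega)
  have : IsSimpleModule R (range g) := isSimpleModule_iff_isAtom.2 (hatom g hg)
  exact ⟨ker g, ‹_›, IsSimpleModule.congr g.quotKerEquivRange,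
    ⟨(Submodule.prodEquivOfIsCompl _ _ hcompl).symm.trans
      (eψ.symm.prodCongr g.quotKerEquivRange.symm)⟩⟩

end TwoCompositionFactors

/-- Lemma on modules with at most two composition factors: if `dim_K M = dim_K N`,
`M` or `N` has composition length at most `2` and
`dim Hom_R(X, M) ≤ dim Hom_R(X, N)` for every submodule `X` of `M`, then either
`M ≅ N`, or `M` has composition length exactly `2` with composition factors `S`, `T`
(namely a simple submodule `S` with simple quotient `T = M/S`) and `N ≅ S ⊕ T`. -/
theorem module_two_composition_factors {K R M N : Type*} [Field K] [Ring R] [Algebra K R]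
    [AddCommGroup M] [Module K M] [Module R M] [IsScalarTower K R M] [SMulCommClass R K M]
    [AddCommGroup N] [Module K N] [Module R N] [IsScalarTower K R N] [SMulCommClass R K N]
    [FiniteDimensional K M] [FiniteDimensional K N]
    (hdim : Module.finrank K M = Module.finrank K N)
    (hlen : lengthLE2 R M ∨ lengthLE2 R N)
    (hhom : ∀ X : Submodule R M,
      Module.finrank K (X →ₗ[R] M) ≤ Module.finrank K (X →ₗ[R] N)) :
    Nonempty (M ≃ₗ[R] N) ∨
      ∃ S : Submodule R M, IsSimpleModule R S ∧ IsSimpleModule R (M ⧸ S) ∧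
        Nonempty (N ≃ₗ[R] (S × (M ⧸ S))) := by
  by_cases hinj : ∀ f : M →ₗ[R] N, ¬ Function.Injective f
  · exact .inr <| exists_isSimpleModule_linearEquiv_prod hdim
      (hlen.imp lengthLE2.length_le_two lengthLE2.length_le_two) hhom hinj
  obtain ⟨f, hf⟩ := not_forall_not.1 hinj
  have hsurj : Function.Surjective f :=
    (injective_iff_surjective_of_finrank_eq_finrank hdim (f := f.restrictScalars K)).1 hf
  exact .inl ⟨.ofBijective f ⟨hf, hsurj⟩⟩
end

section
/- Let K be an algebraically closed field, let B_3(K) be the group of invertible lower triangular 3×3 matrices over K acting by conjugation on the space n_3(K) of strictly lower triangular 3×3 matrices. Then every element of n_3(K) is B_3(K)-conjugate to exactly one of the five matrices 0, E_{21}, E_{31}, E_{32}, E_{21}+E_{32}, where E_{ij} denotes the matrix unit with entry 1 in position (i,j) and 0 elsewhere. -/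
open Matrix

/-- The `3×3` matrix unit `E_{ij}` (with `0`-indexed positions: `E_{21} = Eu 1 0`, etc.). -/
def Eu {K : Type*} [Field K] (i j : Fin 3) : Matrix (Fin 3) (Fin 3) K :=
  Matrix.single i j 1

/-- A `3×3` matrix is strictly lower triangular. -/
def StrictLower {K : Type*} [Field K] (X : Matrix (Fin 3) (Fin 3) K) : Prop :=
  ∀ i j : Fin 3, i ≤ j → X i j = 0

/-!
If `g` is lower triangular and `g * N = M * g` with `N`, `M` strictly lower triangular,
comparing the entries `(2,1)`, `(3,2)` and `(3,1)` gives `g₂₂ N₂₁ = M₂₁ g₁₁`,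
`g₃₃ N₃₂ = M₃₂ g₂₂` and, when `N₂₁ = N₃₂ = 0`, `g₃₃ N₃₁ = M₃₁ g₁₁`. As the diagonal entries
of an invertible triangular matrix are nonzero, the vanishing of `N₂₁`, of `N₃₂` and (when
both vanish) of `N₃₁` are invariants of the orbit, and they separate the five normal forms.
Conversely, an explicit lower triangular conjugator, chosen according to which of these
entries vanish, brings `N` to its normal form.
-/

section

variable {K : Type*} [Field K]

theorem Matrix.IsLowerTriangular.diag_ne_zero {m R : Type*} [Fintype m] [LinearOrder m]
    [CommRing R] {G : Matrix m m R} (hG : G.IsLowerTriangular) (hdet : G.det ≠ 0) (i : m) :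
    G i i ≠ 0 := fun h =>
  hdet (det_of_isLowerTriangular G hG ▸ Finset.prod_eq_zero (Finset.mem_univ i) h)

theorem exists_isLowerTriangular_conj_eq {m : Type*} [Fintype m] [DecidableEq m]
    [LinearOrder m] {N r P : Matrix m m K} (hP : P.IsLowerTriangular) (hdet : P.det ≠ 0)
    (h : P * N = r * P) :
    ∃ g : GL m K, (g : Matrix m m K).IsLowerTriangular ∧
      (g : Matrix m m K) * N * ((g⁻¹ : GL m K) : Matrix m m K) = r :=
  ⟨GeneralLinearGroup.mkOfDetNeZero P hdet, hP, (Units.mul_inv_eq_iff_eq_mul _).mpr h⟩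

theorem exists_isLowerTriangular_conj_eq_of_fin_three {N r : Matrix (Fin 3) (Fin 3) K}
    {x y z u v w : K} (hx : x ≠ 0) (hz : z ≠ 0) (hw : w ≠ 0)
    (h : !![x, 0, 0; y, z, 0; u, v, w] * N = r * !![x, 0, 0; y, z, 0; u, v, w]) :
    ∃ g : GL (Fin 3) K, (g : Matrix (Fin 3) (Fin 3) K).IsLowerTriangular ∧
      (g : Matrix (Fin 3) (Fin 3) K) * N * ((g⁻¹ : GL (Fin 3) K) : Matrix (Fin 3) (Fin 3) K) =
        r := by
  refine exists_isLowerTriangular_conj_eq ?_ (by simp [det_fin_three, hx, hz, hw]) h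
  intro i j hij
  fin_cases i <;> fin_cases j <;> first | rfl | exact absurd hij (by decide)

theorem StrictLower.eq_fin_three {N : Matrix (Fin 3) (Fin 3) K} (hN : StrictLower N) :
    N = !![0, 0, 0; N 1 0, 0, 0; N 2 0, N 2 1, 0] := by
  ext i j
  fin_cases i <;> fin_cases j <;> simp <;> exact hN _ _ (by decide)

def borelNormalForms (K : Type*) [Field K] : List (Matrix (Fin 3) (Fin 3) K) :=
  [0, Eu 1 0, Eu 2 0, Eu 2 1, Eu 1 0 + Eu 2 1]

open Classical in
noncomputable def borelNormalForm (N : Matrix (Fin 3) (Fin 3) K) : Matrix (Fin 3) (Fin 3) K :=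
  if N 1 0 = 0 then
    if N 2 1 = 0 then (if N 2 0 = 0 then 0 else Eu 2 0) else Eu 2 1
  else if N 2 1 = 0 then Eu 1 0 else Eu 1 0 + Eu 2 1

theorem borelNormalForm_mem (N : Matrix (Fin 3) (Fin 3) K) :
    borelNormalForm N ∈ borelNormalForms K := by
  unfold borelNormalForm
  split_ifs <;> simp [borelNormalForms]

theorem strictLower_of_mem_borelNormalForms {r : Matrix (Fin 3) (Fin 3) K}
    (hr : r ∈ borelNormalForms K) : StrictLower r := by
  intro i j hij
  simp only [borelNormalForms, List.mem_cons, List.not_mem_nil, or_false] at hr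
  rcases hr with rfl | rfl | rfl | rfl | rfl <;>
    fin_cases i <;> fin_cases j <;> simp_all [Eu]

theorem borelNormalForm_of_mem {r : Matrix (Fin 3) (Fin 3) K}
    (hr : r ∈ borelNormalForms K) : borelNormalForm r = r := by
  simp only [borelNormalForms, List.mem_cons, List.not_mem_nil, or_false] at hr
  rcases hr with rfl | rfl | rfl | rfl | rfl <;> simp [borelNormalForm, Eu]

theorem borelNormalForm_congr {N M : Matrix (Fin 3) (Fin 3) K}
    (h10 : M 1 0 = 0 ↔ N 1 0 = 0) (h21 : M 2 1 = 0 ↔ N 2 1 = 0)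
    (h20 : N 1 0 = 0 → N 2 1 = 0 → (M 2 0 = 0 ↔ N 2 0 = 0)) :
    borelNormalForm M = borelNormalForm N := by
  unfold borelNormalForm
  split_ifs <;> first | rfl | tauto

theorem borelNormalForm_eq_of_mul_eq_mul {G N M : Matrix (Fin 3) (Fin 3) K}
    (hG : G.IsLowerTriangular) (hdet : G.det ≠ 0) (hN : StrictLower N) (hM : StrictLower M)
    (h : G * N = M * G) :
    borelNormalForm M = borelNormalForm N := by
  have hG01 : G 0 1 = 0 := hG (by decide)
  have hG12 : G 1 2 = 0 := hG (by decide)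
  have entry (i j : Fin 3) := congrFun (congrFun h i) j
  simp only [mul_apply, Fin.sum_univ_three] at entry
  have e10 : G 1 1 * N 1 0 = M 1 0 * G 0 0 := by
    simpa [hN 0 0 le_rfl, hG12, hM 1 1 le_rfl, hM 1 2 (by decide)] using entry 1 0
  have e21 : G 2 2 * N 2 1 = M 2 1 * G 1 1 := by
    simpa [hN 0 1 (by decide), hN 1 1 le_rfl, hG01, hM 2 2 le_rfl] using entry 2 1
  have e20 : G 2 1 * N 1 0 + G 2 2 * N 2 0 = M 2 0 * G 0 0 + M 2 1 * G 1 0 := by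
    simpa [hN 0 0 le_rfl, hM 2 2 le_rfl] using entry 2 0
  have h00 := hG.diag_ne_zero hdet 0
  have h11 := hG.diag_ne_zero hdet 1
  have h22 := hG.diag_ne_zero hdet 2
  have h10 : M 1 0 = 0 ↔ N 1 0 = 0 := by
    rw [← mul_left_inj' h00, zero_mul, ← e10, mul_eq_zero, or_iff_right h11]
  have h21 : M 2 1 = 0 ↔ N 2 1 = 0 := by
    rw [← mul_left_inj' h11, zero_mul, ← e21, mul_eq_zero, or_iff_right h22]
  refine borelNormalForm_congr h10 h21 fun ha hc => ?_
  rw [ha, h21.mpr hc, mul_zero, zero_add, zero_mul, add_zero] at e20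
  rw [← mul_left_inj' h00, zero_mul, ← e20, mul_eq_zero, or_iff_right h22]

theorem exists_conj_eq_borelNormalForm {N : Matrix (Fin 3) (Fin 3) K} (hN : StrictLower N) :
    ∃ g : GL (Fin 3) K, (g : Matrix (Fin 3) (Fin 3) K).IsLowerTriangular ∧
      (g : Matrix (Fin 3) (Fin 3) K) * N * ((g⁻¹ : GL (Fin 3) K) : Matrix (Fin 3) (Fin 3) K) =
        borelNormalForm N := by
  unfold borelNormalForm
  split_ifs with ha hc hb hc <;> rw [hN.eq_fin_three]
  · exact exists_isLowerTriangular_conj_eq_of_fin_three (x := 1) (y := 0) (z := 1) (u := 0)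
      (v := 0) one_ne_zero one_ne_zero one_ne_zero
      (by ext i j; fin_cases i <;> fin_cases j <;> simp [*])
  · exact exists_isLowerTriangular_conj_eq_of_fin_three (x := N 2 0) (y := 0) (z := 1) (u := 0)
      (v := 0) hb one_ne_zero one_ne_zero
      (by ext i j; fin_cases i <;> fin_cases j <;> simp [Eu, mul_apply, Fin.sum_univ_three, *])
  · exact exists_isLowerTriangular_conj_eq_of_fin_three (x := 1) (y := N 2 0) (z := N 2 1)
      (u := 0) (v := 0) one_ne_zero hc one_ne_zero
      (by ext i j; fin_cases i <;> fin_cases j <;> simp [Eu, mul_apply, Fin.sum_univ_three, *])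
  · exact exists_isLowerTriangular_conj_eq_of_fin_three (x := N 1 0) (y := 0) (z := 1) (u := 0)
      (v := -(N 2 0 / N 1 0)) ha one_ne_zero one_ne_zero
      (by ext i j; fin_cases i <;> fin_cases j <;> simp [Eu, mul_apply, Fin.sum_univ_three, *])
  · exact exists_isLowerTriangular_conj_eq_of_fin_three (x := N 2 1 * N 1 0) (y := N 2 0)
      (z := N 2 1) (u := 0) (v := 0) (mul_ne_zero hc ha) hc one_ne_zero
      (by ext i j; fin_cases i <;> fin_cases j <;> simp [Eu, mul_apply, Fin.sum_univ_three, *])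

end

theorem borel_orbits_of_strictly_lower_general {K : Type*} [Field K]
    (N : Matrix (Fin 3) (Fin 3) K) (hN : StrictLower N) :
    ∃! r : Matrix (Fin 3) (Fin 3) K,
      r ∈ [(0 : Matrix (Fin 3) (Fin 3) K), Eu 1 0, Eu 2 0, Eu 2 1, Eu 1 0 + Eu 2 1] ∧
      ∃ g : GL (Fin 3) K,
        (∀ i j : Fin 3, i < j → (g : Matrix (Fin 3) (Fin 3) K) i j = 0) ∧
        (g : Matrix (Fin 3) (Fin 3) K) * N * ((g⁻¹ : GL (Fin 3) K) : Matrix (Fin 3) (Fin 3) K)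
          = r := by
  obtain ⟨g, hg, hconj⟩ := exists_conj_eq_borelNormalForm hN
  refine ⟨borelNormalForm N, ⟨borelNormalForm_mem N, g, fun i j hij => hg hij, hconj⟩, ?_⟩
  rintro r ⟨hr, g', hg', hconj'⟩
  rw [← borelNormalForm_of_mem hr]
  exact borelNormalForm_eq_of_mul_eq_mul (fun i j hij => hg' i j hij) g'.det_ne_zero hN
    (strictLower_of_mem_borelNormalForms hr) ((Units.mul_inv_eq_iff_eq_mul _).mp hconj')

/-- Every strictly lower triangular `3×3` matrix is conjugate, under the group of
invertible lower triangular matrices, to exactly one of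
`0`, `E_{21}`, `E_{31}`, `E_{32}`, `E_{21}+E_{32}`. -/
theorem borel_orbits_of_strictly_lower {K : Type*} [Field K] [IsAlgClosed K]
    (N : Matrix (Fin 3) (Fin 3) K) (hN : StrictLower N) :
    ∃! r : Matrix (Fin 3) (Fin 3) K,
      r ∈ [(0 : Matrix (Fin 3) (Fin 3) K), Eu 1 0, Eu 2 0, Eu 2 1, Eu 1 0 + Eu 2 1] ∧
      ∃ g : GL (Fin 3) K,
        (∀ i j : Fin 3, i < j → (g : Matrix (Fin 3) (Fin 3) K) i j = 0) ∧
        (g : Matrix (Fin 3) (Fin 3) K) * N * ((g⁻¹ : GL (Fin 3) K) : Matrix (Fin 3) (Fin 3) K)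
          = r :=
  borel_orbits_of_strictly_lower_general N hN
end

section
/- Let K be an algebraically closed field. Every 2-dimensional linear subspace of the space n_3(K) of strictly lower triangular 3×3 matrices is carried by conjugation by some element of GL_3(K) onto exactly one of the four subspaces Span{E_{21}, E_{31}}, Span{E_{31}, E_{32}}, Span{E_{21}, E_{32}}, Span{E_{21}+E_{32}, E_{31}}. -/
/-!
Existence. If `E₃₁ ∈ W`, then `W` also contains some `a E₂₁ + c E₃₂ ≠ 0`; the cases `c = 0`,
`a = 0` and `a c ≠ 0` give the first, second and fourth normal form, the last after conjugating
by `diag(1, a, a c)`. If `E₃₁ ∉ W`, then `X ↦ (X₂₁, X₃₂)` is injective on `W`, hence onto `K²`,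
so `W` contains `E₂₁ + p E₃₁` and `E₃₂ + q E₃₁`, and a unipotent conjugation removes the
`E₃₁`-components. In each case it suffices that the conjugated generators of the normal form lie
in `W`, since both spaces are `2`-dimensional.

Uniqueness. Conjugation is an algebra automorphism, so it preserves "all products vanish",
"closed under squaring" and "`x m y ∈ K x` for all `x, y ∈ V` and all matrices `m`" (all elements
of `V` have a common row space); these three properties separate the four normal forms.
-/

open Matrix

def conjMap {K : Type*} [Field K] {n : ℕ} (g : GL (Fin n) K) :
    Matrix (Fin n) (Fin n) K →ₗ[K] Matrix (Fin n) (Fin n) K where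
  toFun X := (g : Matrix (Fin n) (Fin n) K) * X *
    ((g⁻¹ : GL (Fin n) K) : Matrix (Fin n) (Fin n) K)
  map_add' X Y := by simp [Matrix.mul_add, Matrix.add_mul]
  map_smul' c X := by simp [Matrix.mul_smul, Matrix.smul_mul]

open Submodule Module

section Invariants

variable {K A B : Type*} [CommRing K] [Ring A] [Algebra K A] [Ring B] [Algebra K B]

def IsMulZero (V : Submodule K A) : Prop := ∀ x ∈ V, ∀ y ∈ V, x * y = 0

def IsMulSelfClosed (V : Submodule K A) : Prop := ∀ x ∈ V, x * x ∈ V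

def IsSandwichProportional (V : Submodule K A) : Prop :=
  ∀ x ∈ V, ∀ y ∈ V, ∀ m : A, ∃ c : K, x * m * y = c • x

theorem IsMulZero.isMulSelfClosed {V : Submodule K A} (h : IsMulZero V) : IsMulSelfClosed V :=
  fun x hx => h x hx x hx ▸ V.zero_mem

variable (f : A ≃ₐ[K] B) {V : Submodule K A}

theorem mem_map_algEquiv {x : A} : f x ∈ V.map f.toLinearMap ↔ x ∈ V :=
  ⟨fun ⟨_, hy, e⟩ => f.injective e ▸ hy, mem_map_of_mem⟩

theorem isMulZero_map_iff : IsMulZero (V.map f.toLinearMap) ↔ IsMulZero V := by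
  constructor
  · intro h x hx y hy
    exact f.injective (by simpa using h _ (mem_map_of_mem hx) _ (mem_map_of_mem hy))
  · rintro h _ ⟨x, hx, rfl⟩ _ ⟨y, hy, rfl⟩
    simp [← map_mul, h x hx y hy]

theorem isMulSelfClosed_map_iff :
    IsMulSelfClosed (V.map f.toLinearMap) ↔ IsMulSelfClosed V := by
  constructor
  · intro h x hx
    simpa [← map_mul, mem_map_algEquiv] using h _ (mem_map_of_mem hx)
  · rintro h _ ⟨x, hx, rfl⟩
    simpa [← map_mul, mem_map_algEquiv] using h x hx

theorem isSandwichProportional_map_iff :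
    IsSandwichProportional (V.map f.toLinearMap) ↔ IsSandwichProportional V := by
  constructor
  · intro h x hx y hy m
    obtain ⟨c, hc⟩ := h _ (mem_map_of_mem hx) _ (mem_map_of_mem hy) (f m)
    exact ⟨c, f.injective (by simpa [← map_mul, ← map_smul] using hc)⟩
  · rintro h _ ⟨x, hx, rfl⟩ _ ⟨y, hy, rfl⟩ m
    obtain ⟨c, hc⟩ := h x hx y hy (f.symm m)
    exact ⟨c, by simp [← map_smul, ← hc]⟩

end Invariants

theorem finrank_span_pair {K M : Type*} [Field K] [AddCommGroup M] [Module K M] {x y : M}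
    (h : LinearIndependent K ![x, y]) : finrank K (span K {x, y}) = 2 := by
  rw [← Matrix.range_cons_cons_empty x y ![], finrank_span_eq_card h, Fintype.card_fin]

section Conjugation

variable {K : Type*} [Field K] {n : ℕ}

theorem conjMap_eq_toAlgEquiv (g : GL (Fin n) K) :
    conjMap g = (MulSemiringAction.toAlgEquiv K _ (ConjAct.toConjAct g)).toLinearMap := by
  ext X : 1
  simp [conjMap, ConjAct.units_smul_def]

theorem conjMap_inv_comp_conjMap (g : GL (Fin n) K) :
    (conjMap g⁻¹).comp (conjMap g) = LinearMap.id := by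
  ext X : 1
  simp [conjMap, Matrix.mul_assoc]

theorem map_conjMap_inv_eq {V W : Submodule K (Matrix (Fin n) (Fin n) K)} (g : GL (Fin n) K)
    (hle : V.map (conjMap g) ≤ W) (hdim : finrank K V = finrank K W) :
    W.map (conjMap g⁻¹) = V := by
  have hVW : V.map (conjMap g) = W := by
    refine eq_of_le_of_finrank_eq hle ?_
    rw [conjMap_eq_toAlgEquiv, ← AlgEquiv.toLinearEquiv_toLinearMap,
      LinearEquiv.finrank_map_eq, hdim]
  rw [← hVW, ← map_comp, conjMap_inv_comp_conjMap, Submodule.map_id]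

end Conjugation

section NormalForms

variable {K : Type*} [Field K]

local notation "𝕄" => Matrix (Fin 3) (Fin 3) K

variable (K) in
def twoDimNormalForms : List (Submodule K 𝕄) :=
  [span K {Eu 1 0, Eu 2 0}, span K {Eu 2 0, Eu 2 1}, span K {Eu 1 0, Eu 2 1},
    span K {Eu 1 0 + Eu 2 1, Eu 2 0}]

theorem finrank_eq_two_of_mem_twoDimNormalForms {V : Submodule K 𝕄}
    (hV : V ∈ twoDimNormalForms K) : finrank K V = 2 := by
  simp only [twoDimNormalForms, List.mem_cons, List.not_mem_nil, or_false] at hV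
  rcases hV with rfl | rfl | rfl | rfl <;>
    refine finrank_span_pair (LinearIndependent.pair_iff.2 fun s t hst => ⟨?_, ?_⟩) <;>
    first
    | simpa [Eu] using congrFun₂ hst 1 0
    | simpa [Eu] using congrFun₂ hst 2 0
    | simpa [Eu] using congrFun₂ hst 2 1

theorem isMulZero_span_E21_E31 : IsMulZero (span K {Eu 1 0, Eu 2 0} : Submodule K 𝕄) := by
  simp only [IsMulZero, mem_span_pair]
  rintro _ ⟨a, b, rfl⟩ _ ⟨c, d, rfl⟩
  ext i j
  fin_cases i <;> fin_cases j <;> simp [Eu, single_apply, Matrix.mul_apply]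

theorem isMulZero_span_E31_E32 : IsMulZero (span K {Eu 2 0, Eu 2 1} : Submodule K 𝕄) := by
  simp only [IsMulZero, mem_span_pair]
  rintro _ ⟨a, b, rfl⟩ _ ⟨c, d, rfl⟩
  ext i j
  fin_cases i <;> fin_cases j <;> simp [Eu, single_apply, Matrix.mul_apply]

theorem isSandwichProportional_span_E21_E31 :
    IsSandwichProportional (span K {Eu 1 0, Eu 2 0} : Submodule K 𝕄) := by
  simp only [IsSandwichProportional, mem_span_pair]
  rintro _ ⟨a, b, rfl⟩ _ ⟨c, d, rfl⟩ m
  refine ⟨m 0 1 * c + m 0 2 * d, ?_⟩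
  ext i j
  fin_cases i <;> fin_cases j <;>
    simp [Eu, single_apply, Matrix.mul_apply, Fin.sum_univ_three] <;> ring

theorem not_isSandwichProportional_span_E31_E32 :
    ¬ IsSandwichProportional (span K {Eu 2 0, Eu 2 1} : Submodule K 𝕄) := by
  intro h
  obtain ⟨c, hc⟩ := h (Eu 2 0) (subset_span (by simp)) (Eu 2 1) (subset_span (by simp)) (Eu 0 2)
  simpa [Eu, single_apply, Matrix.mul_apply, Fin.sum_univ_three] using congrFun₂ hc 2 1

theorem not_isMulZero_span_E21_add_E32_E31 :
    ¬ IsMulZero (span K {Eu 1 0 + Eu 2 1, Eu 2 0} : Submodule K 𝕄) := by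
  intro h
  have hx : Eu 1 0 + Eu 2 1 ∈ (span K {Eu 1 0 + Eu 2 1, Eu 2 0} : Submodule K 𝕄) :=
    subset_span (by simp)
  simpa [Eu, single_apply, Matrix.mul_apply, Fin.sum_univ_three] using congrFun₂ (h _ hx _ hx) 2 0

theorem isMulSelfClosed_span_E21_add_E32_E31 :
    IsMulSelfClosed (span K {Eu 1 0 + Eu 2 1, Eu 2 0} : Submodule K 𝕄) := by
  simp only [IsMulSelfClosed, mem_span_pair]
  rintro _ ⟨a, b, rfl⟩
  refine ⟨0, a * a, ?_⟩
  ext i j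
  fin_cases i <;> fin_cases j <;> simp [Eu, single_apply, Matrix.mul_apply, Fin.sum_univ_three]

theorem not_isMulSelfClosed_span_E21_E32 :
    ¬ IsMulSelfClosed (span K {Eu 1 0, Eu 2 1} : Submodule K 𝕄) := by
  intro h
  obtain ⟨a, b, hab⟩ := mem_span_pair.1 <|
    h (Eu 1 0 + Eu 2 1) (add_mem (subset_span (by simp)) (subset_span (by simp)))
  simpa [Eu, single_apply, Matrix.mul_apply, Fin.sum_univ_three] using congrFun₂ hab 2 0

theorem eq_of_map_conjMap_eq {W V V' : Submodule K 𝕄}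
    (hV : V ∈ twoDimNormalForms K) (hV' : V' ∈ twoDimNormalForms K) {g g' : GL (Fin 3) K}
    (h : W.map (conjMap g) = V) (h' : W.map (conjMap g') = V') : V' = V := by
  have transfer (P : Submodule K 𝕄 → Prop)
      (hP : ∀ (f : 𝕄 ≃ₐ[K] 𝕄) U, P (U.map f.toLinearMap) ↔ P U) : P V' ↔ P V := by
    rw [← h, ← h', conjMap_eq_toAlgEquiv, conjMap_eq_toAlgEquiv, hP, hP]
  have hMZ := transfer _ isMulZero_map_iff
  have hMS := transfer _ isMulSelfClosed_map_iff
  have hSP := transfer _ isSandwichProportional_map_iff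
  simp only [twoDimNormalForms, List.mem_cons, List.not_mem_nil, or_false] at hV hV'
  rcases hV with rfl | rfl | rfl | rfl <;> rcases hV' with rfl | rfl | rfl | rfl <;>
    simp_all [isMulZero_span_E21_E31, isMulZero_span_E21_E31.isMulSelfClosed,
      isMulZero_span_E31_E32, isMulZero_span_E31_E32.isMulSelfClosed,
      isSandwichProportional_span_E21_E31, not_isSandwichProportional_span_E31_E32,
      not_isMulZero_span_E21_add_E32_E31, isMulSelfClosed_span_E21_add_E32_E31,
      not_isMulSelfClosed_span_E21_E32]

def HasNormalForm (W : Submodule K 𝕄) : Prop :=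
  ∃ V ∈ twoDimNormalForms K, ∃ g : GL (Fin 3) K, W.map (conjMap g) = V

theorem HasNormalForm.of_conjMap_mem {W : Submodule K 𝕄} (hdim : finrank K W = 2) {u v : 𝕄}
    (huv : span K {u, v} ∈ twoDimNormalForms K) (h : GL (Fin 3) K)
    (hu : conjMap h u ∈ W) (hv : conjMap h v ∈ W) : HasNormalForm W := by
  refine ⟨_, huv, h⁻¹, map_conjMap_inv_eq h ?_ ?_⟩
  · rw [map_span, span_le, Set.image_pair, Set.pair_subset_iff]
    exact ⟨hu, hv⟩
  · rw [finrank_eq_two_of_mem_twoDimNormalForms huv, hdim]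

theorem StrictLower.eq_sum {X : 𝕄} (hX : StrictLower X) :
    X = X 1 0 • Eu 1 0 + X 2 0 • Eu 2 0 + X 2 1 • Eu 2 1 := by
  ext i j
  fin_cases i <;> fin_cases j <;> simp [Eu] <;> exact hX _ _ (by decide)

theorem StrictLower.eq_smul_E31 {X : 𝕄} (hX : StrictLower X) (h₁₀ : X 1 0 = 0)
    (h₂₁ : X 2 1 = 0) : X = X 2 0 • Eu 2 0 := by
  simpa [h₁₀, h₂₁] using hX.eq_sum

theorem hasNormalForm_of_E31_mem {W : Submodule K 𝕄} (hdim : finrank K W = 2)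
    (hW : ∀ X ∈ W, StrictLower X) (hE : Eu 2 0 ∈ W) : HasNormalForm W := by
  have hlt : span K {Eu 2 0} < W := by
    refine lt_of_le_of_ne (span_le.2 (by simpa)) fun heq => ?_
    have := finrank_span_le_card (R := K) ({Eu 2 0} : Set 𝕄)
    rw [heq, hdim] at this
    simp at this
  obtain ⟨X, hXW, hX⟩ := SetLike.exists_of_lt hlt
  obtain ⟨a, b, c, rfl⟩ : ∃ a b c : K, X = a • Eu 1 0 + b • Eu 2 0 + c • Eu 2 1 :=
    ⟨_, _, _, (hW X hXW).eq_sum⟩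
  have hac : ¬(a = 0 ∧ c = 0) := fun ⟨ha, hc⟩ => hX (mem_span_singleton.2 ⟨b, by simp [ha, hc]⟩)
  have hY : a • Eu 1 0 + c • Eu 2 1 ∈ W := by
    convert sub_mem hXW (W.smul_mem b hE) using 1
    abel
  by_cases hc : c = 0
  · have ha : a ≠ 0 := fun ha => hac ⟨ha, hc⟩
    refine .of_conjMap_mem hdim (u := Eu 1 0) (v := Eu 2 0) (by simp [twoDimNormalForms]) 1 ?_ ?_
    · simpa [conjMap, hc, ha] using W.smul_mem a⁻¹ hY
    · simpa [conjMap] using hE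
  by_cases ha : a = 0
  · refine .of_conjMap_mem hdim (u := Eu 2 0) (v := Eu 2 1) (by simp [twoDimNormalForms]) 1 ?_ ?_
    · simpa [conjMap] using hE
    · simpa [conjMap, hc, ha] using W.smul_mem c⁻¹ hY
  let h : GL (Fin 3) K :=
    ⟨!![1, 0, 0; 0, a, 0; 0, 0, a * c], !![1, 0, 0; 0, a⁻¹, 0; 0, 0, (a * c)⁻¹],
      by
        ext i j
        fin_cases i <;> fin_cases j <;> simp [Matrix.mul_apply, Fin.sum_univ_three, ha]
        field_simp,
      by
        ext i j
        fin_cases i <;> fin_cases j <;> simp [Matrix.mul_apply, Fin.sum_univ_three, ha]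
        field_simp⟩
  refine .of_conjMap_mem hdim (u := Eu 1 0 + Eu 2 1) (v := Eu 2 0) (by simp [twoDimNormalForms])
    h ?_ ?_
  · convert hY using 1
    ext i j
    fin_cases i <;> fin_cases j <;>
      simp [h, conjMap, Eu, single_apply, Matrix.mul_apply, Fin.sum_univ_three, vecMul, dotProduct]
    field_simp
  · convert W.smul_mem (a * c) hE using 1
    ext i j
    fin_cases i <;> fin_cases j <;>
      simp [h, conjMap, Eu, single_apply, Matrix.mul_apply, Fin.sum_univ_three, vecMul, dotProduct]

theorem hasNormalForm_of_E31_not_mem {W : Submodule K 𝕄} (hdim : finrank K W = 2)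
    (hW : ∀ X ∈ W, StrictLower X) (hE : Eu 2 0 ∉ W) : HasNormalForm W := by
  let π : W →ₗ[K] K × K :=
    ((entryLinearMap K K 1 0).prod (entryLinearMap K K 2 1)).domRestrict W
  have hπ : Function.Surjective π := by
    rw [← LinearMap.injective_iff_surjective_of_finrank_eq_finrank (by simp [hdim]),
      ← LinearMap.ker_eq_bot, LinearMap.ker_eq_bot']
    rintro ⟨X, hXW⟩ hπX
    simp only [π, LinearMap.domRestrict_apply, LinearMap.prod_apply, Function.prod_apply,
      entryLinearMap_apply, Prod.mk_eq_zero] at hπX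
    have hX := (hW X hXW).eq_smul_E31 hπX.1 hπX.2
    by_cases h₂₀ : X 2 0 = 0
    · ext1
      simpa [h₂₀] using hX
    · rw [hX] at hXW
      exact absurd ((smul_mem_iff W h₂₀).1 hXW) hE
  obtain ⟨⟨X, hXW⟩, hπX⟩ := hπ (1, 0)
  obtain ⟨⟨Y, hYW⟩, hπY⟩ := hπ (0, 1)
  simp only [π, LinearMap.domRestrict_apply, LinearMap.prod_apply, Function.prod_apply,
    entryLinearMap_apply, Prod.mk.injEq] at hπX hπY
  have hX := (hW X hXW).eq_sum
  have hY := (hW Y hYW).eq_sum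
  rw [hπX.1, hπX.2] at hX
  rw [hπY.1, hπY.2] at hY
  generalize X 2 0 = p at hX
  generalize Y 2 0 = q at hY
  subst hX hY
  let h : GL (Fin 3) K := ⟨!![1, 0, 0; -q, 1, 0; 0, p, 1], !![1, 0, 0; q, 1, 0; -q * p, -p, 1],
    by ext i j; fin_cases i <;> fin_cases j <;> simp [Matrix.mul_apply, Fin.sum_univ_three]; ring,
    by ext i j; fin_cases i <;> fin_cases j <;> simp [Matrix.mul_apply, Fin.sum_univ_three]; ring⟩
  refine .of_conjMap_mem hdim (u := Eu 1 0) (v := Eu 2 1) (by simp [twoDimNormalForms]) h ?_ ?_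
  · convert hXW using 1
    ext i j
    fin_cases i <;> fin_cases j <;>
      simp [h, conjMap, Eu, single_apply, Matrix.mul_apply, Fin.sum_univ_three, vecMul, dotProduct]
  · convert hYW using 1
    ext i j
    fin_cases i <;> fin_cases j <;>
      simp [h, conjMap, Eu, single_apply, Matrix.mul_apply, Fin.sum_univ_three, vecMul, dotProduct]

theorem hasNormalForm {W : Submodule K 𝕄} (hdim : finrank K W = 2)
    (hW : ∀ X ∈ W, StrictLower X) : HasNormalForm W := by
  by_cases hE : Eu 2 0 ∈ W
  · exact hasNormalForm_of_E31_mem hdim hW hE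
  · exact hasNormalForm_of_E31_not_mem hdim hW hE

end NormalForms

theorem two_dim_subspaces_of_strictly_lower_general {K : Type*} [Field K]
    (W : Submodule K (Matrix (Fin 3) (Fin 3) K))
    (hdim : Module.finrank K W = 2) (hW : ∀ X ∈ W, StrictLower X) :
    ∃! V : Submodule K (Matrix (Fin 3) (Fin 3) K),
      V ∈ [Submodule.span K {Eu 1 0, Eu 2 0}, Submodule.span K {Eu 2 0, Eu 2 1},
           Submodule.span K {Eu 1 0, Eu 2 1}, Submodule.span K {Eu 1 0 + Eu 2 1, Eu 2 0}] ∧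
      ∃ g : GL (Fin 3) K, Submodule.map (conjMap g) W = V := by
  obtain ⟨V, hV, g, hg⟩ := hasNormalForm hdim hW
  exact ⟨V, ⟨hV, g, hg⟩, fun V' ⟨hV', g', hg'⟩ => eq_of_map_conjMap_eq hV hV' hg hg'⟩

/-- Every `2`-dimensional subspace of the space of strictly lower triangular `3×3`
matrices is carried by conjugation by some element of `GL_3(K)` onto exactly one of
`Span{E_{21},E_{31}}`, `Span{E_{31},E_{32}}`, `Span{E_{21},E_{32}}`,
`Span{E_{21}+E_{32},E_{31}}`. -/
theorem two_dim_subspaces_of_strictly_lower {K : Type*} [Field K] [IsAlgClosed K]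
    (W : Submodule K (Matrix (Fin 3) (Fin 3) K))
    (hdim : Module.finrank K W = 2) (hW : ∀ X ∈ W, StrictLower X) :
    ∃! V : Submodule K (Matrix (Fin 3) (Fin 3) K),
      V ∈ [Submodule.span K {Eu 1 0, Eu 2 0}, Submodule.span K {Eu 2 0, Eu 2 1},
           Submodule.span K {Eu 1 0, Eu 2 1}, Submodule.span K {Eu 1 0 + Eu 2 1, Eu 2 0}] ∧
      ∃ g : GL (Fin 3) K, Submodule.map (conjMap g) W = V :=
  two_dim_subspaces_of_strictly_lower_general W hdim hW
end

section
/- Let K be an algebraically closed field. The Zariski closure of the GL_3(K)-orbit of the pair D := (E_{31}, E_{32}) of 3×3 matrices contains E_ρ := (E_{21}, ρE_{21}) for every ρ ∈ K; in particular, since the pairs E_ρ for distinct ρ ∈ K lie in distinct GL_3(K)-orbits, the closure of the single orbit O(D) contains infinitely many GL_3(K)-orbits. -/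
/-!
For `t ≠ 0` the invertible matrix `P = [[1,0,0],[ρ,0,t],[0,1,0]]` satisfies
`P E₂₁ = E₃₁ P` and `P (ρE₂₁ + tE₂₃) = E₃₂ P`, so the line `t ↦ (E₂₁, ρE₂₁ + tE₂₃)` lies in
`O(D)` away from `t = 0`. A polynomial vanishing on `O(D)` therefore restricts to a one-variable
polynomial with infinitely many roots, which is zero, and evaluating it at `t = 0` gives
`E_ρ ∈ closure O(D)`. Conjugation preserves the relation `B₂ = ρB₁`, so `E_ρ` and `E_σ` lie in the
same orbit only if `ρ = σ`; an algebraically closed field being infinite, there are infinitely many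
such orbits.
-/

open Matrix

/-- Evaluation of an element of the free algebra `K⟨x_1,…,x_m⟩` at a tuple of matrices. -/
noncomputable def evalTuple {K : Type*} [CommRing K] {n m : ℕ}
    (A : Fin m → Matrix (Fin n) (Fin n) K) :
    FreeAlgebra K (Fin m) →ₐ[K] Matrix (Fin n) (Fin n) K :=
  FreeAlgebra.lift K A

/-- `φ(A)`: the `kn × ln` matrix obtained by substituting the tuple `A` into the
matrix `φ` over the free algebra. -/
noncomputable def phiEval {K : Type*} [CommRing K] {n m k l : ℕ}
    (A : Fin m → Matrix (Fin n) (Fin n) K)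
    (φ : Matrix (Fin k) (Fin l) (FreeAlgebra K (Fin m))) :
    Matrix (Fin k × Fin n) (Fin l × Fin n) K :=
  fun p q => evalTuple A (φ p.1 q.1) p.2 q.2

/-- The hom-preorder `A ≤hom B`: `rk φ(A) ≥ rk φ(B)` for all matrices `φ`
over the free algebra. -/
def homLE {K : Type*} [Field K] {n m : ℕ} (A B : Fin m → Matrix (Fin n) (Fin n) K) : Prop :=
  ∀ (k l : ℕ) (φ : Matrix (Fin k) (Fin l) (FreeAlgebra K (Fin m))),
    (phiEval B φ).rank ≤ (phiEval A φ).rank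

/-- The orbit of a matrix tuple under simultaneous conjugation by `GL_n(K)`. -/
def simOrbit {K : Type*} [Field K] {n m : ℕ} (A : Fin m → Matrix (Fin n) (Fin n) K) :
    Set (Fin m → Matrix (Fin n) (Fin n) K) :=
  {B | ∃ g : GL (Fin n) K, ∀ i,
    B i = (g : Matrix (Fin n) (Fin n) K) * A i * ((g⁻¹ : GL (Fin n) K) : Matrix (Fin n) (Fin n) K)}

/-- Membership in the Zariski closure of a subset of the affine space of matrix tuples:
every polynomial function vanishing on the set vanishes at the given point. -/
def inZariskiClosure {K : Type*} [Field K] {n m : ℕ}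
    (S : Set (Fin m → Matrix (Fin n) (Fin n) K)) (B : Fin m → Matrix (Fin n) (Fin n) K) : Prop :=
  ∀ p : MvPolynomial (Fin m × Fin n × Fin n) K,
    (∀ C ∈ S, MvPolynomial.eval (fun q => C q.1 q.2.1 q.2.2) p = 0) →
    MvPolynomial.eval (fun q => B q.1 q.2.1 q.2.2) p = 0

/-- The degeneration preorder: `A ≤deg B` iff `B` lies in the Zariski closure of the
`GL_n(K)`-orbit of `A`. -/
def degLE {K : Type*} [Field K] {n m : ℕ} (A B : Fin m → Matrix (Fin n) (Fin n) K) : Prop :=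
  inZariskiClosure (simOrbit A) B

/-- A tuple of matrices is nilpotent if its components generate a nilpotent
(non-unital) subalgebra of the matrix algebra. -/
def IsNilpotentTuple {K : Type*} [Field K] {n m : ℕ}
    (A : Fin m → Matrix (Fin n) (Fin n) K) : Prop :=
  ∃ N : ℕ, ∀ f : Fin N → Matrix (Fin n) (Fin n) K,
    (∀ i, f i ∈ NonUnitalAlgebra.adjoin K (Set.range A)) → (List.ofFn f).prod = 0

section

variable {K : Type*} [Field K] {n m : ℕ}

theorem inZariskiClosure_of_add_smul_mem [Infinite K]
    {S : Set (Fin m → Matrix (Fin n) (Fin n) K)} {B C : Fin m → Matrix (Fin n) (Fin n) K}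
    (h : ∀ t : K, t ≠ 0 → B + t • C ∈ S) : inZariskiClosure S B := by
  intro p hp
  let line : Polynomial K := MvPolynomial.aeval
    (fun q => Polynomial.C (B q.1 q.2.1 q.2.2) + Polynomial.C (C q.1 q.2.1 q.2.2) * Polynomial.X) p
  have eval_line (t : K) :
      line.eval t = MvPolynomial.eval (fun q => (B + t • C) q.1 q.2.1 q.2.2) p := by
    rw [← Polynomial.coe_aeval_eq_eval, MvPolynomial.comp_aeval_apply,
      ← MvPolynomial.coe_aeval_eq_eval]
    exact congrArg (MvPolynomial.aeval · p) (funext fun q => by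
      simp only [Polynomial.coe_aeval_eq_eval, Polynomial.eval_add, Polynomial.eval_mul,
        Polynomial.eval_C, Polynomial.eval_X, Pi.add_apply, Pi.smul_apply, Matrix.add_apply,
        Matrix.smul_apply, smul_eq_mul, mul_comm])
  have line_eq_zero : line = 0 :=
    Polynomial.eq_zero_of_infinite_isRoot _ <|
      (Set.finite_singleton (0 : K)).infinite_compl.mono fun t ht =>
        (eval_line t).trans (hp _ (h t ht))
  simpa [line_eq_zero] using (eval_line 0).symm

theorem mem_simOrbit_of_mul_eq_mul {A B : Fin m → Matrix (Fin n) (Fin n) K}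
    (P : GL (Fin n) K) (h : ∀ i, (P : Matrix (Fin n) (Fin n) K) * B i = A i * P) :
    B ∈ simOrbit A :=
  ⟨P⁻¹, fun i => by
    rw [inv_inv, mul_assoc, ← h i, ← mul_assoc, Units.inv_mul, one_mul]⟩

theorem mem_simOrbit_self (A : Fin m → Matrix (Fin n) (Fin n) K) : A ∈ simOrbit A :=
  ⟨1, fun i => by simp⟩

theorem smul_eq_of_mem_simOrbit_pair {X : Matrix (Fin n) (Fin n) K} {ρ : K}
    {B : Fin 2 → Matrix (Fin n) (Fin n) K} (hB : B ∈ simOrbit ![X, ρ • X]) :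
    B 1 = ρ • B 0 := by
  obtain ⟨g, hg⟩ := hB
  simp [hg]

theorem simOrbit_smul_pair_injective {X : Matrix (Fin n) (Fin n) K} (hX : X ≠ 0) :
    Function.Injective fun ρ : K => simOrbit ![X, ρ • X] := by
  intro ρ σ h
  have hσ : ![X, σ • X] ∈ simOrbit ![X, ρ • X] := by
    rw [show simOrbit ![X, ρ • X] = simOrbit ![X, σ • X] from h]
    exact mem_simOrbit_self _
  have hσρ : σ • X = ρ • X := smul_eq_of_mem_simOrbit_pair hσ
  exact smul_left_injective K hX hσρ.symm

theorem mem_simOrbit_E31_E32_of_ne_zero (ρ : K) {t : K} (ht : t ≠ 0) :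
    ![Eu 1 0, ρ • Eu 1 0] + t • ![0, Eu 1 2] ∈
      simOrbit (![Eu 2 0, Eu 2 1] : Fin 2 → Matrix (Fin 3) (Fin 3) K) := by
  let P : Matrix (Fin 3) (Fin 3) K := !![1, 0, 0; ρ, 0, t; 0, 1, 0]
  have hP : P.det ≠ 0 := by simp [P, Matrix.det_fin_three, ht]
  refine mem_simOrbit_of_mul_eq_mul (Matrix.GeneralLinearGroup.mkOfDetNeZero P hP) fun i => ?_
  ext a b
  fin_cases i <;> fin_cases a <;> fin_cases b <;>
    simp [P, Eu, Matrix.mul_apply, Matrix.single]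

theorem degLE_E31_E32_E21_smul_E21 [Infinite K] (ρ : K) :
    degLE (![Eu 2 0, Eu 2 1] : Fin 2 → Matrix (Fin 3) (Fin 3) K) ![Eu 1 0, ρ • Eu 1 0] :=
  inZariskiClosure_of_add_smul_mem fun _ => mem_simOrbit_E31_E32_of_ne_zero ρ

end

/-- The Zariski closure of the orbit of `D = (E_{31}, E_{32})` contains
`E_ρ = (E_{21}, ρE_{21})` for every `ρ ∈ K`; the pairs `E_ρ` for distinct `ρ` lie in
distinct `GL_3(K)`-orbits, and hence the closure of the single orbit `O(D)` contains
infinitely many orbits. -/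
theorem orbit_closure_of_D_contains_infinitely_many_orbits
    {K : Type*} [Field K] [IsAlgClosed K] :
    (∀ ρ : K, degLE (![Eu 2 0, Eu 2 1] : Fin 2 → Matrix (Fin 3) (Fin 3) K)
      ![Eu 1 0, ρ • Eu 1 0]) ∧
    (∀ ρ σ : K, ρ ≠ σ →
      simOrbit (![Eu 1 0, ρ • Eu 1 0] : Fin 2 → Matrix (Fin 3) (Fin 3) K) ≠
        simOrbit (![Eu 1 0, σ • Eu 1 0] : Fin 2 → Matrix (Fin 3) (Fin 3) K)) ∧
    {S : Set (Fin 2 → Matrix (Fin 3) (Fin 3) K) |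
      ∃ ρ : K, S = simOrbit (![Eu 1 0, ρ • Eu 1 0] : Fin 2 → Matrix (Fin 3) (Fin 3) K)}.Infinite := by
  have E21_ne_zero : (Eu 1 0 : Matrix (Fin 3) (Fin 3) K) ≠ 0 := fun h => by
    simpa [Eu] using congrFun (congrFun h 1) 0
  have orbit_injective := simOrbit_smul_pair_injective E21_ne_zero
  refine ⟨degLE_E31_E32_E21_smul_E21, fun _ _ => orbit_injective.ne, ?_⟩
  convert Set.infinite_range_of_injective orbit_injective using 1
  ext S
  simp [eq_comm]
end

section
/- Let K be an algebraically closed field and λ, ρ, ν ∈ K. The pair B_{ρ,λ} := (E_{21}+E_{32}, ρ(E_{21}+E_{32})+λE_{31}) degenerates to the pair E_ν := (E_{21}, νE_{21}) (i.e. E_ν lies in the Zariski closure of the GL_3(K)-orbit of B_{ρ,λ}) if and only if ν = ρ. -/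
open Matrix

/-!
Polynomial identities satisfied by a tuple survive degeneration: conjugation transports them,
and the entries of `f(C)` are polynomials in the entries of `C`, so `f(C) = 0` cuts out a
Zariski-closed set. The pair `B_{ρ,λ}` satisfies `X₂ = ρ X₁ + λ X₁²`; on `E_ν` this identity
reads `(ν - ρ) E_{21} = 0`. Conversely, conjugating `B_{ρ,ρ}` by `diag(1, 1, t)` gives
`E_ρ + t D` for a fixed pair `D`, and a polynomial vanishing on this line for all `t ≠ 0`
vanishes at `t = 0` because `K` is infinite.
-/

section Degeneration

variable {K : Type*} [Field K] {n m : ℕ}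

/-- The tuple of `n × n` matrices whose entries are the coordinate functions on
`Fin m → Matrix (Fin n) (Fin n) K`. -/
noncomputable def genericMatrixTuple :
    Fin m → Matrix (Fin n) (Fin n) (MvPolynomial (Fin m × Fin n × Fin n) K) :=
  fun i => Matrix.of fun j k => MvPolynomial.X (i, j, k)

theorem evalTuple_eq_map_genericMatrixTuple (A : Fin m → Matrix (Fin n) (Fin n) K)
    (f : FreeAlgebra K (Fin m)) :
    evalTuple A f = (FreeAlgebra.lift K genericMatrixTuple f).map
      (MvPolynomial.eval fun q => A q.1 q.2.1 q.2.2) := by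
  let evalAt : Matrix (Fin n) (Fin n) (MvPolynomial (Fin m × Fin n × Fin n) K) →ₐ[K]
      Matrix (Fin n) (Fin n) K := (MvPolynomial.aeval fun q => A q.1 q.2.1 q.2.2).mapMatrix
  have : evalTuple A = evalAt.comp (FreeAlgebra.lift K genericMatrixTuple) := by
    refine FreeAlgebra.hom_ext (funext fun i => ?_)
    ext j k
    simp [evalTuple, evalAt, genericMatrixTuple]
  rw [this]
  rfl

theorem inZariskiClosure.evalTuple_eq_zero {S : Set (Fin m → Matrix (Fin n) (Fin n) K)}
    {B : Fin m → Matrix (Fin n) (Fin n) K} (hB : inZariskiClosure S B)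
    {f : FreeAlgebra K (Fin m)} (hS : ∀ C ∈ S, evalTuple C f = 0) : evalTuple B f = 0 := by
  ext j k
  rw [evalTuple_eq_map_genericMatrixTuple]
  refine hB _ fun C hC => ?_
  simpa [evalTuple_eq_map_genericMatrixTuple] using congrFun (congrFun (hS C hC) j) k

theorem evalTuple_conj (A : Fin m → Matrix (Fin n) (Fin n) K)
    (g : (Matrix (Fin n) (Fin n) K)ˣ) (f : FreeAlgebra K (Fin m)) :
    evalTuple (fun i => (g : Matrix (Fin n) (Fin n) K) * A i * (↑g⁻¹ : Matrix (Fin n) (Fin n) K))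
        f =
      (g : Matrix (Fin n) (Fin n) K) * evalTuple A f * (↑g⁻¹ : Matrix (Fin n) (Fin n) K) := by
  let conj := MulSemiringAction.toAlgEquiv K (Matrix (Fin n) (Fin n) K) (ConjAct.toConjAct g)
  have : evalTuple
      (fun i => (g : Matrix (Fin n) (Fin n) K) * A i * (↑g⁻¹ : Matrix (Fin n) (Fin n) K)) =
      (conj : Matrix (Fin n) (Fin n) K →ₐ[K] Matrix (Fin n) (Fin n) K).comp (evalTuple A) := by
    refine FreeAlgebra.hom_ext (funext fun i => ?_)
    simp [evalTuple, conj, ConjAct.units_smul_def]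
  rw [this]
  simp [conj, ConjAct.units_smul_def]

theorem evalTuple_eq_zero_of_mem_simOrbit {A C : Fin m → Matrix (Fin n) (Fin n) K}
    {f : FreeAlgebra K (Fin m)} (hA : evalTuple A f = 0) (hC : C ∈ simOrbit A) :
    evalTuple C f = 0 := by
  obtain ⟨g, hg⟩ := hC
  rw [funext hg, evalTuple_conj, hA, mul_zero, zero_mul]

theorem degLE.evalTuple_eq_zero {A B : Fin m → Matrix (Fin n) (Fin n) K} (h : degLE A B)
    {f : FreeAlgebra K (Fin m)} (hA : evalTuple A f = 0) : evalTuple B f = 0 :=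
  inZariskiClosure.evalTuple_eq_zero h fun _ hC => evalTuple_eq_zero_of_mem_simOrbit hA hC

theorem inZariskiClosure_of_forall_ne_zero_add_smul_mem [Infinite K]
    {S : Set (Fin m → Matrix (Fin n) (Fin n) K)} {A D : Fin m → Matrix (Fin n) (Fin n) K}
    (hS : ∀ t : K, t ≠ 0 → A + t • D ∈ S) : inZariskiClosure S A := by
  intro p hp
  set line : Fin m × Fin n × Fin n → Polynomial K := fun q =>
    Polynomial.C (A q.1 q.2.1 q.2.2) + Polynomial.C (D q.1 q.2.1 q.2.2) * Polynomial.X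
  have eval_line (t : K) : Polynomial.eval t (MvPolynomial.aeval line p) =
      MvPolynomial.eval (fun q => A q.1 q.2.1 q.2.2 + t * D q.1 q.2.1 q.2.2) p := by
    rw [← Polynomial.coe_aeval_eq_eval, MvPolynomial.comp_aeval_apply,
      MvPolynomial.aeval_eq_eval]
    congr 2 with q
    simp only [line, Polynomial.coe_aeval_eq_eval, Polynomial.eval_add, Polynomial.eval_mul,
      Polynomial.eval_C, Polynomial.eval_X]
    ring
  have hline : MvPolynomial.aeval line p = 0 := by
    refine Polynomial.eq_zero_of_infinite_isRoot _
      ((Set.finite_singleton 0).infinite_compl.mono fun t ht => ?_)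
    simpa [eval_line] using hp _ (hS t ht)
  simpa [eval_line] using congrArg (Polynomial.eval 0) hline

end Degeneration

section PairB

variable {K : Type*} [Field K]

theorem Eu_one_zero_add_Eu_two_one_sq :
    (Eu 1 0 + Eu 2 1 : Matrix (Fin 3) (Fin 3) K) ^ 2 = Eu 2 0 := by
  ext a b
  fin_cases a <;> fin_cases b <;> simp [Eu, sq, Matrix.mul_apply, Fin.sum_univ_three]

theorem Eu_one_zero_sq : (Eu 1 0 : Matrix (Fin 3) (Fin 3) K) ^ 2 = 0 := by
  ext a b
  fin_cases a <;> fin_cases b <;> simp [Eu, sq, Matrix.mul_apply, Fin.sum_univ_three]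

theorem add_smul_mem_simOrbit_pairB (ρ l : K) {t : K} (ht : t ≠ 0) :
    ![Eu 1 0, ρ • Eu 1 0] + t • ![Eu 2 1, ρ • Eu 2 1 + l • Eu 2 0] ∈
      simOrbit (![Eu 1 0 + Eu 2 1, ρ • (Eu 1 0 + Eu 2 1) + l • Eu 2 0] :
        Fin 2 → Matrix (Fin 3) (Fin 3) K) := by
  let g : GL (Fin 3) K := ⟨Matrix.diagonal ![1, 1, t], Matrix.diagonal ![1, 1, t⁻¹],
    by simp [← Matrix.diagonal_one, Fin.forall_fin_succ, ht],
    by simp [← Matrix.diagonal_one, Fin.forall_fin_succ, ht]⟩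
  refine ⟨g, fun i => ?_⟩
  ext a b
  fin_cases i <;> fin_cases a <;> fin_cases b <;>
    simp [g, Eu, Matrix.mul_apply, Matrix.diagonal]

end PairB

/-- `B_{ρ,λ} = (E_{21}+E_{32}, ρ(E_{21}+E_{32})+λE_{31})` degenerates to
`E_ν = (E_{21}, νE_{21})` if and only if `ν = ρ`. -/
theorem B_degenerates_to_E_iff {K : Type*} [Field K] [IsAlgClosed K] (ρ l ν : K) :
    degLE (![Eu 1 0 + Eu 2 1, ρ • (Eu 1 0 + Eu 2 1) + l • Eu 2 0] :
        Fin 2 → Matrix (Fin 3) (Fin 3) K)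
      ![Eu 1 0, ν • Eu 1 0] ↔ ν = ρ := by
  constructor
  · intro h
    let rel : FreeAlgebra K (Fin 2) :=
      FreeAlgebra.ι K 1 - ρ • FreeAlgebra.ι K 0 - l • FreeAlgebra.ι K 0 ^ 2
    have hB : evalTuple ![Eu 1 0 + Eu 2 1, ρ • (Eu 1 0 + Eu 2 1) + l • Eu 2 0] rel = 0 := by
      simp [rel, evalTuple, Eu_one_zero_add_Eu_two_one_sq]
    have hE : (ν - ρ) • (Eu 1 0 : Matrix (Fin 3) (Fin 3) K) = 0 := by
      simpa [rel, evalTuple, Eu_one_zero_sq, sub_smul] using h.evalTuple_eq_zero hB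
    simpa [Eu, sub_eq_zero] using congrFun (congrFun hE 1) 0
  · rintro rfl
    exact inZariskiClosure_of_forall_ne_zero_add_smul_mem fun _ ht =>
      add_smul_mem_simOrbit_pairB _ l ht
end

section
/- Let K be an algebraically closed field, d < m positive integers, and φ_j ∈ K⟨x_1,…,x_d⟩ for j = d+1,…,m. Let (K^{n×n})^m_φ := {A ∈ (K^{n×n})^m : A_j = φ_j(A_1,…,A_d) for j = d+1,…,m}, a Zariski closed GL_n(K)-stable subset, and let π : (K^{n×n})^m_φ → (K^{n×n})^d be the projection onto the first d components, which is a GL_n(K)-equivariant isomorphism of varieties. Then for A ∈ (K^{n×n})^m_φ and B ∈ (K^{n×n})^m one has A ≤_deg B (in (K^{n×n})^m) if and only if B ∈ (K^{n×n})^m_φ and π(A) ≤_deg π(B) in (K^{n×n})^d. -/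
open Matrix

/-- The subvariety `(K^{n×n})^m_φ` of tuples whose components beyond the first `d`
are given by substituting the first `d` components into the prescribed elements
`φ_j` of the free algebra `K⟨x_1,…,x_d⟩`. -/
def constrainedTuples {K : Type*} [Field K] {n d m : ℕ} (hdm : d ≤ m)
    (φ : Fin m → FreeAlgebra K (Fin d)) : Set (Fin m → Matrix (Fin n) (Fin n) K) :=
  {A | ∀ j : Fin m, d ≤ (j : ℕ) →
    A j = FreeAlgebra.lift K (fun i : Fin d => A (Fin.castLE hdm i)) (φ j)}

section AuxiliaryLemmas

variable {K : Type*} [Field K] {n d m : ℕ}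

/-- Composing a lift out of the free algebra with an algebra hom. -/
lemma lift_comp_aux {A B : Type*} [Semiring A] [Semiring B] [Algebra K A] [Algebra K B]
    (E : A →ₐ[K] B) {X : Type*} (G : X → A) (ψ : FreeAlgebra K X) :
    E (FreeAlgebra.lift K G ψ) = FreeAlgebra.lift K (fun x => E (G x)) ψ := by
  suffices h : E.comp (FreeAlgebra.lift K G) = FreeAlgebra.lift K (fun x => E (G x)) from
    DFunLike.congr_fun h ψ
  apply FreeAlgebra.hom_ext
  funext x
  simp

/-- Conjugation by an invertible matrix as an algebra homomorphism. -/
noncomputable def conjAlgHom (g : GL (Fin n) K) :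
    Matrix (Fin n) (Fin n) K →ₐ[K] Matrix (Fin n) (Fin n) K where
  toFun x := (g : Matrix (Fin n) (Fin n) K) * x * ((g⁻¹ : GL (Fin n) K) : Matrix (Fin n) (Fin n) K)
  map_one' := by
    have h : (g : Matrix (Fin n) (Fin n) K) * ((g⁻¹ : GL (Fin n) K) : Matrix (Fin n) (Fin n) K)
        = 1 := by
      rw [← Matrix.GeneralLinearGroup.coe_mul, mul_inv_cancel g]; rfl
    simpa using h
  map_mul' x y := by
    have h : ((g⁻¹ : GL (Fin n) K) : Matrix (Fin n) (Fin n) K) * (g : Matrix (Fin n) (Fin n) K)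
        = 1 := by
      rw [← Matrix.GeneralLinearGroup.coe_mul, inv_mul_cancel g]; rfl
    calc (g : Matrix (Fin n) (Fin n) K) * (x * y) * ((g⁻¹ : GL (Fin n) K) : _)
        = (g : Matrix (Fin n) (Fin n) K) * x *
            (((g⁻¹ : GL (Fin n) K) : Matrix (Fin n) (Fin n) K) * (g : Matrix (Fin n) (Fin n) K))
            * y * ((g⁻¹ : GL (Fin n) K) : _) := by rw [h]; noncomm_ring
      _ = _ := by noncomm_ring
  map_zero' := by simp
  map_add' x y := by noncomm_ring
  commutes' c := by
    have h : (g : Matrix (Fin n) (Fin n) K) * ((g⁻¹ : GL (Fin n) K) : Matrix (Fin n) (Fin n) K)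
        = 1 := by
      rw [← Matrix.GeneralLinearGroup.coe_mul, mul_inv_cancel g]; rfl
    simp only [Algebra.algebraMap_eq_smul_one]
    show (g : Matrix (Fin n) (Fin n) K) * (c • 1) *
      ((g⁻¹ : GL (Fin n) K) : Matrix (Fin n) (Fin n) K) = c • 1
    rw [mul_smul_comm, smul_mul_assoc, mul_one, h]

@[simp] lemma conjAlgHom_apply (g : GL (Fin n) K) (x : Matrix (Fin n) (Fin n) K) :
    conjAlgHom g x = (g : Matrix (Fin n) (Fin n) K) * x *
      ((g⁻¹ : GL (Fin n) K) : Matrix (Fin n) (Fin n) K) := rfl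

/-- The orbit of a constrained tuple consists of constrained tuples. -/
lemma orbit_subset_constrained (hdm : d ≤ m) (φ : Fin m → FreeAlgebra K (Fin d))
    {A : Fin m → Matrix (Fin n) (Fin n) K} (hA : A ∈ constrainedTuples hdm φ) :
    simOrbit A ⊆ constrainedTuples hdm φ := by
  rintro C ⟨g, hg⟩ j hj
  have h1 : C j = conjAlgHom g (A j) := hg j
  rw [h1, hA j hj, lift_comp_aux]
  have heq : (fun x => conjAlgHom g (A (Fin.castLE hdm x))) =
      fun i => C (Fin.castLE hdm i) := by
    funext i; exact (hg (Fin.castLE hdm i)).symm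
  rw [heq]

/-- Entrywise evaluation of a matrix over a polynomial ring commutes with
lifting out of the free algebra. -/
lemma eval_lift_generic {σ : Type*} (v : σ → K)
    (G : Fin d → Matrix (Fin n) (Fin n) (MvPolynomial σ K)) (ψ : FreeAlgebra K (Fin d)) :
    (FreeAlgebra.lift K G ψ).map (MvPolynomial.eval v) =
      FreeAlgebra.lift K (fun i => (G i).map (MvPolynomial.eval v)) ψ := by
  have hfun : ⇑(MvPolynomial.aeval v : MvPolynomial σ K →ₐ[K] K) = MvPolynomial.eval v := rfl
  have h := lift_comp_aux
    (((MvPolynomial.aeval v : MvPolynomial σ K →ₐ[K] K)).mapMatrix (m := Fin n)) G ψ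
  simpa [AlgHom.mapMatrix_apply, hfun] using h

end AuxiliaryLemmas

set_option maxHeartbeats 2000000 in
/-- For `A` in the constrained subvariety `(K^{n×n})^m_φ` and arbitrary `B`, one has
`A ≤deg B` in `(K^{n×n})^m` iff `B` lies in `(K^{n×n})^m_φ` and
`π(A) ≤deg π(B)` in `(K^{n×n})^d`, where `π` is the projection onto the first `d`
components. -/
theorem degLE_constrained_iff {K : Type*} [Field K] [IsAlgClosed K] {n d m : ℕ}
    (hd : 0 < d) (hdm : d < m) (φ : Fin m → FreeAlgebra K (Fin d))
    (A B : Fin m → Matrix (Fin n) (Fin n) K) (hA : A ∈ constrainedTuples hdm.le φ) :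
    degLE A B ↔
      B ∈ constrainedTuples hdm.le φ ∧
      degLE (fun i : Fin d => A (Fin.castLE hdm.le i))
        (fun i : Fin d => B (Fin.castLE hdm.le i)) := by
  classical
  -- generic matrices over the polynomial ring on `m`-tuples of matrices
  set σm := Fin m × Fin n × Fin n
  set σd := Fin d × Fin n × Fin n
  let vm : (Fin m → Matrix (Fin n) (Fin n) K) → σm → K := fun C q => C q.1 q.2.1 q.2.2
  let vd : (Fin d → Matrix (Fin n) (Fin n) K) → σd → K := fun C q => C q.1 q.2.1 q.2.2
  let Gm : Fin d → Matrix (Fin n) (Fin n) (MvPolynomial σm K) :=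
    fun i => Matrix.of fun r s => MvPolynomial.X (Fin.castLE hdm.le i, r, s)
  let Gd : Fin d → Matrix (Fin n) (Fin n) (MvPolynomial σd K) :=
    fun i => Matrix.of fun r s => MvPolynomial.X (i, r, s)
  have hGm : ∀ (C : Fin m → Matrix (Fin n) (Fin n) K) (i : Fin d),
      (Gm i).map (MvPolynomial.eval (vm C)) = C (Fin.castLE hdm.le i) := by
    intro C i; ext r s; simp [Gm, Matrix.map_apply, vm]
  have hGd : ∀ (C : Fin d → Matrix (Fin n) (Fin n) K) (i : Fin d),
      (Gd i).map (MvPolynomial.eval (vd C)) = C i := by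
    intro C i; ext r s; simp [Gd, Matrix.map_apply, vd]
  -- evaluation of the generic lift at a tuple
  have hLm : ∀ (C : Fin m → Matrix (Fin n) (Fin n) K) (ψ : FreeAlgebra K (Fin d)) (r s : Fin n),
      MvPolynomial.eval (vm C) ((FreeAlgebra.lift K Gm ψ) r s) =
        (FreeAlgebra.lift K (fun i => C (Fin.castLE hdm.le i)) ψ) r s := by
    intro C ψ r s
    have h := eval_lift_generic (vm C) Gm ψ
    have h2 : (FreeAlgebra.lift K Gm ψ).map (MvPolynomial.eval (vm C)) =
        FreeAlgebra.lift K (fun i => C (Fin.castLE hdm.le i)) ψ := by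
      rw [h]
      have heq : (fun i => (Gm i).map (MvPolynomial.eval (vm C))) =
          fun i => C (Fin.castLE hdm.le i) := funext (hGm C)
      rw [heq]
    exact congrFun (congrFun (congrArg (fun M => (M : Matrix _ _ K)) h2) r) s
  have hLd : ∀ (C : Fin d → Matrix (Fin n) (Fin n) K) (ψ : FreeAlgebra K (Fin d)) (r s : Fin n),
      MvPolynomial.eval (vd C) ((FreeAlgebra.lift K Gd ψ) r s) =
        (FreeAlgebra.lift K C ψ) r s := by
    intro C ψ r s
    have h := eval_lift_generic (vd C) Gd ψ
    have h2 : (FreeAlgebra.lift K Gd ψ).map (MvPolynomial.eval (vd C)) =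
        FreeAlgebra.lift K C ψ := by
      rw [h]
      have heq : (fun i => (Gd i).map (MvPolynomial.eval (vd C))) = C := funext (hGd C)
      rw [heq]
    exact congrFun (congrFun (congrArg (fun M => (M : Matrix _ _ K)) h2) r) s
  constructor
  · intro hdeg
    constructor
    · -- B is constrained
      intro j hj
      ext r s
      set p : MvPolynomial σm K :=
        MvPolynomial.X (j, r, s) - (FreeAlgebra.lift K Gm (φ j)) r s with hp
      have hvan : ∀ C ∈ simOrbit A, MvPolynomial.eval (vm C) p = 0 := by
        intro C hC
        have hCc := orbit_subset_constrained hdm.le φ hA hC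
        have hCe : C j r s =
            (FreeAlgebra.lift K (fun i => C (Fin.castLE hdm.le i)) (φ j)) r s :=
          congrFun (congrFun (hCc j hj) r) s
        calc MvPolynomial.eval (vm C) p
            = C j r s - MvPolynomial.eval (vm C) ((FreeAlgebra.lift K Gm (φ j)) r s) := by
              rw [hp, map_sub, MvPolynomial.eval_X]
          _ = C j r s -
              (FreeAlgebra.lift K (fun i => C (Fin.castLE hdm.le i)) (φ j)) r s := by
              rw [hLm C (φ j)]
          _ = 0 := by rw [hCe, sub_self]
      have h0 := hdeg p hvan
      have h1 : B j r s -
          (FreeAlgebra.lift K (fun i => B (Fin.castLE hdm.le i)) (φ j)) r s = 0 := by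
        calc B j r s - (FreeAlgebra.lift K (fun i => B (Fin.castLE hdm.le i)) (φ j)) r s
            = B j r s - MvPolynomial.eval (vm B) ((FreeAlgebra.lift K Gm (φ j)) r s) := by
              rw [hLm B (φ j)]
          _ = MvPolynomial.eval (vm B) p := by rw [hp, map_sub, MvPolynomial.eval_X]
          _ = 0 := h0
      exact sub_eq_zero.mp h1
    · -- projection degeneration
      intro p hp
      set p' : MvPolynomial σm K :=
        MvPolynomial.rename (fun q : σd => ((Fin.castLE hdm.le q.1 : Fin m), q.2)) p with hp'
      have hvan : ∀ C ∈ simOrbit A, MvPolynomial.eval (vm C) p' = 0 := by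
        rintro C ⟨g, hg⟩
        rw [hp', MvPolynomial.eval_rename]
        have : (vm C) ∘ (fun q : σd => ((Fin.castLE hdm.le q.1 : Fin m), q.2)) =
            vd (fun i : Fin d => C (Fin.castLE hdm.le i)) := rfl
        rw [this]
        exact hp _ ⟨g, fun i => hg (Fin.castLE hdm.le i)⟩
      have := hdeg p' hvan
      rwa [hp', MvPolynomial.eval_rename] at this
  · rintro ⟨hB, hproj⟩ p hp
    -- substitution expressing the variables beyond the first `d` blocks
    set S : σm → MvPolynomial σd K := fun q =>
      if h : (q.1 : ℕ) < d then MvPolynomial.X (⟨q.1, h⟩, q.2.1, q.2.2)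
      else (FreeAlgebra.lift K Gd (φ q.1)) q.2.1 q.2.2 with hS
    have key : ∀ C ∈ constrainedTuples hdm.le φ,
        MvPolynomial.eval (vd (fun i : Fin d => C (Fin.castLE hdm.le i)))
          (MvPolynomial.bind₁ S p) = MvPolynomial.eval (vm C) p := by
      intro C hC
      have hb : MvPolynomial.eval (vd (fun i : Fin d => C (Fin.castLE hdm.le i)))
          (MvPolynomial.bind₁ S p) =
          MvPolynomial.eval (fun q : σm =>
            MvPolynomial.eval (vd (fun i : Fin d => C (Fin.castLE hdm.le i))) (S q)) p :=
        MvPolynomial.aeval_bind₁ _ S p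
      rw [hb]
      have heq : (fun q : σm =>
          MvPolynomial.eval (vd (fun i : Fin d => C (Fin.castLE hdm.le i))) (S q)) = vm C := by
        funext q
        obtain ⟨j, r, s⟩ := q
        by_cases h : (j : ℕ) < d
        · simp only [hS, dif_pos h, MvPolynomial.eval_X]
          show C (Fin.castLE hdm.le ⟨(j : ℕ), h⟩) r s = C j r s
          have hj : Fin.castLE hdm.le ⟨(j : ℕ), h⟩ = j := Fin.ext rfl
          rw [hj]
        · simp only [hS, dif_neg h]
          exact (hLd (fun i => C (Fin.castLE hdm.le i)) (φ j) r s).trans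
            ((congrFun (congrFun (hC j (le_of_not_gt h)) r) s).symm)
      rw [heq]
    have hvan : ∀ D ∈ simOrbit (fun i : Fin d => A (Fin.castLE hdm.le i)),
        MvPolynomial.eval (vd D) (MvPolynomial.bind₁ S p) = 0 := by
      rintro D ⟨g, hg⟩
      set C : Fin m → Matrix (Fin n) (Fin n) K := fun j =>
        (g : Matrix (Fin n) (Fin n) K) * A j *
          ((g⁻¹ : GL (Fin n) K) : Matrix (Fin n) (Fin n) K) with hCdef
      have hCorb : C ∈ simOrbit A := ⟨g, fun j => rfl⟩
      have hDC : D = fun i : Fin d => C (Fin.castLE hdm.le i) := by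
        funext i; rw [hg i]
      rw [hDC, key C (orbit_subset_constrained hdm.le φ hA hCorb)]
      exact hp C hCorb
    have := hproj (MvPolynomial.bind₁ S p) hvan
    rwa [key B hB] at this
end

section
/- Let K be a field and let A = (A_1,…,A_m) be an m-tuple of strictly lower triangular 3×3 matrices over K. Then there exist indices 1 ≤ i, j ≤ m such that A_i and A_j generate the same associative subalgebra of n_3(K) as A_1,…,A_m do. -/
open Matrix

/-!
The product of two strictly lower triangular matrices is `X * Y = (X₂₁ Y₁₀) E₂₀`, so the
commutator `X * Y - Y * X` is the `2×2` minor `X₂₁ Y₁₀ - Y₂₁ X₁₀` of their subdiagonal entries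
times `E₂₀`. If some pair `A i, A j` has a nonzero minor, `E₂₀` lies in the algebra they generate,
and `A i, A j, E₂₀` span all of `n₃(K)`. Otherwise the subdiagonal parts of all `A k` are
proportional, so every `A k` lies in the plane `span {E₂₀, A i}` for a suitable `i`, and by the
exchange lemma two of the `A k` already span all of them.
-/

open Submodule in
theorem exists_forall_mem_span_pair_of_forall_mem_span_pair {K V ι : Type*} [DivisionRing K]
    [AddCommGroup V] [Module K V] {v : ι → V} {x : V} {i : ι}
    (h : ∀ k, v k ∈ span K {x, v i}) : ∃ j, ∀ k, v k ∈ span K {v i, v j} := by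
  by_cases hj : ∃ j, v j ∉ span K {v i}
  · obtain ⟨j, hj⟩ := hj
    have hx : x ∈ span K {v j, v i} := mem_span_insert_exchange (h j) hj
    refine ⟨j, fun k => span_le.2 ?_ (h k)⟩
    rw [Set.pair_comm (v i)]
    exact Set.insert_subset hx (Set.singleton_subset_iff.2 (subset_span (by simp)))
  · push Not at hj
    exact ⟨i, fun k => by simpa using hj k⟩

theorem exists_eq_mul_and_eq_mul_of_mul_eq_mul {K : Type*} [Field K] {a b c d : K}
    (h : d * a = b * c) (hab : a ≠ 0 ∨ b ≠ 0) : ∃ t, c = t * a ∧ d = t * b := by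
  rcases hab with ha | hb
  · exact ⟨c / a, by field_simp, by field_simp; linear_combination h⟩
  · exact ⟨d / b, by field_simp; linear_combination -h, by field_simp⟩

section Adjoin

variable {R A ι : Type*} [CommSemiring R] [NonUnitalSemiring A] [Module R A]
  [IsScalarTower R A A] [SMulCommClass R A A]

theorem NonUnitalAlgebra.mem_adjoin_of_mem_span {s t : Set A} {x : A}
    (hs : s ⊆ adjoin R t) (hx : x ∈ Submodule.span R s) : x ∈ adjoin R t :=
  (Submodule.span_le (p := (adjoin R t).toSubmodule)).2 hs hx

theorem NonUnitalAlgebra.adjoin_pair_eq_adjoin_range {f : ι → A} {i j : ι}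
    (h : ∀ k, f k ∈ adjoin R {f i, f j}) : adjoin R {f i, f j} = adjoin R (Set.range f) :=
  le_antisymm (adjoin_mono (Set.pair_subset (Set.mem_range_self i) (Set.mem_range_self j)))
    (adjoin_le (Set.range_subset_iff.2 h))

end Adjoin

namespace StrictLower

variable {K : Type*} [Field K] {X Y Z : Matrix (Fin 3) (Fin 3) K}

theorem apply_eq_zero (hX : StrictLower X) {i j : Fin 3} (h : i ≤ j) : X i j = 0 :=
  hX i j h

theorem mul_eq (hX : StrictLower X) (hY : StrictLower Y) : X * Y = (X 2 1 * Y 1 0) • Eu 2 0 := by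
  ext i j
  fin_cases i <;> fin_cases j <;>
    simp [Eu, Matrix.mul_apply, Fin.sum_univ_three, hX.apply_eq_zero, hY.apply_eq_zero]

theorem mul_sub_mul (hX : StrictLower X) (hY : StrictLower Y) :
    X * Y - Y * X = (X 2 1 * Y 1 0 - Y 2 1 * X 1 0) • Eu 2 0 := by
  rw [hX.mul_eq hY, hY.mul_eq hX, sub_smul]

theorem Eu_two_zero_mem {S : NonUnitalSubalgebra K (Matrix (Fin 3) (Fin 3) K)}
    (hX : StrictLower X) (hY : StrictLower Y) (hXS : X ∈ S) (hYS : Y ∈ S)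
    (h : X 2 1 * Y 1 0 ≠ Y 2 1 * X 1 0) : Eu 2 0 ∈ S := by
  have hE : Eu 2 0 = (X 2 1 * Y 1 0 - Y 2 1 * X 1 0)⁻¹ • (X * Y - Y * X) := by
    rw [hX.mul_sub_mul hY, smul_smul, inv_mul_cancel₀ (sub_ne_zero.2 h), one_smul]
  rw [hE]
  exact SMulMemClass.smul_mem _ (sub_mem (mul_mem hXS hYS) (mul_mem hYS hXS))

theorem mem_span_Eu_triple (hX : StrictLower X) (hY : StrictLower Y) (hZ : StrictLower Z)
    (h : Y 2 1 * Z 1 0 ≠ Z 2 1 * Y 1 0) :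
    X ∈ Submodule.span K {Eu 2 0, Y, Z} := by
  have hd : Y 2 1 * Z 1 0 - Z 2 1 * Y 1 0 ≠ 0 := sub_ne_zero.2 h
  -- `α, β` solve the subdiagonal coordinates of `X = α Y + β Z` by Cramer's rule.
  obtain ⟨α, hα⟩ : ∃ α, α * (Y 2 1 * Z 1 0 - Z 2 1 * Y 1 0) = X 2 1 * Z 1 0 - Z 2 1 * X 1 0 :=
    ⟨_, div_mul_cancel₀ _ hd⟩
  obtain ⟨β, hβ⟩ : ∃ β, β * (Y 2 1 * Z 1 0 - Z 2 1 * Y 1 0) = Y 2 1 * X 1 0 - X 2 1 * Y 1 0 :=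
    ⟨_, div_mul_cancel₀ _ hd⟩
  refine Submodule.mem_span_triple.2 ⟨X 2 0 - α * Y 2 0 - β * Z 2 0, α, β, ?_⟩
  ext i j
  fin_cases i <;> fin_cases j <;>
    simp [Eu, hX.apply_eq_zero, hY.apply_eq_zero, hZ.apply_eq_zero]
  · exact mul_right_cancel₀ hd (by linear_combination Y 1 0 * hα + Z 1 0 * hβ)
  · ring
  · exact mul_right_cancel₀ hd (by linear_combination Y 2 1 * hα + Z 2 1 * hβ)

theorem mem_span_Eu_pair (hX : StrictLower X) (hY : StrictLower Y) {t : K}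
    (h10 : X 1 0 = t * Y 1 0) (h21 : X 2 1 = t * Y 2 1) :
    X ∈ Submodule.span K {Eu 2 0, Y} := by
  refine Submodule.mem_span_pair.2 ⟨X 2 0 - t * Y 2 0, t, ?_⟩
  ext i j
  fin_cases i <;> fin_cases j <;> simp [Eu, hX.apply_eq_zero, hY.apply_eq_zero, h10, h21]

end StrictLower

theorem exists_forall_mem_span_Eu_pair {K ι : Type*} [Field K] [Nonempty ι]
    {A : ι → Matrix (Fin 3) (Fin 3) K} (hA : ∀ i, StrictLower (A i))
    (hD : ∀ i j, A i 2 1 * A j 1 0 = A j 2 1 * A i 1 0) :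
    ∃ i, ∀ k, A k ∈ Submodule.span K {Eu 2 0, A i} := by
  by_cases h : ∃ i, A i 1 0 ≠ 0 ∨ A i 2 1 ≠ 0
  · obtain ⟨i, hi⟩ := h
    refine ⟨i, fun k => ?_⟩
    obtain ⟨t, h10, h21⟩ := exists_eq_mul_and_eq_mul_of_mul_eq_mul (hD k i) hi
    exact (hA k).mem_span_Eu_pair (hA i) h10 h21
  · push Not at h
    refine ⟨Classical.arbitrary ι, fun k => (hA k).mem_span_Eu_pair (hA _) (t := 0) ?_ ?_⟩ <;>
      simp [h k]

/-- For any `m`-tuple of strictly lower triangular `3×3` matrices there are two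
components generating the same (non-unital) associative subalgebra as the whole
tuple. -/
theorem two_generators_suffice {K : Type*} [Field K] {m : ℕ} (hm : 0 < m)
    (A : Fin m → Matrix (Fin 3) (Fin 3) K) (hA : ∀ i, StrictLower (A i)) :
    ∃ i j : Fin m,
      NonUnitalAlgebra.adjoin K {A i, A j} = NonUnitalAlgebra.adjoin K (Set.range A) := by
  by_cases hD : ∃ i j, A i 2 1 * A j 1 0 ≠ A j 2 1 * A i 1 0
  · obtain ⟨i, j, hij⟩ := hD
    have hE : Eu 2 0 ∈ NonUnitalAlgebra.adjoin K {A i, A j} :=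
      (hA i).Eu_two_zero_mem (hA j) (NonUnitalAlgebra.subset_adjoin K (by simp))
        (NonUnitalAlgebra.subset_adjoin K (by simp)) hij
    refine ⟨i, j, NonUnitalAlgebra.adjoin_pair_eq_adjoin_range fun k => ?_⟩
    exact NonUnitalAlgebra.mem_adjoin_of_mem_span
      (Set.insert_subset hE (NonUnitalAlgebra.subset_adjoin K))
      ((hA k).mem_span_Eu_triple (hA i) (hA j) hij)
  · push Not at hD
    have : Nonempty (Fin m) := ⟨⟨0, hm⟩⟩
    obtain ⟨i, hi⟩ := exists_forall_mem_span_Eu_pair hA hD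
    obtain ⟨j, hj⟩ := exists_forall_mem_span_pair_of_forall_mem_span_pair hi
    exact ⟨i, j, NonUnitalAlgebra.adjoin_pair_eq_adjoin_range fun k =>
      NonUnitalAlgebra.mem_adjoin_of_mem_span (NonUnitalAlgebra.subset_adjoin K) (hj k)⟩
end
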